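/- arXiv:1607.01934 — 3 statements merged into one kernel-verified Lean document; each statement's English description precedes it below -/
import Mathlib

section
/- Let c(t) = (x(t), u(t), r(t)) be a future-directed causal curve in the Brinkmann spacetime (with time orientation fixed by declaring the null vector field ∂_r future-directed). Then the coordinate function u is non-decreasing along c; moreover, if c is future-directed timelike then u is strictly increasing along c. Consequently, the Brinkmann spacetime is chronological. -/
open MeasureTheory Filter Set

noncomputable section

/-- Partial derivative of `f` in the `j`-th coordinate direction at `x`. -/
def pderiv' (n : ℕ) (f : (Fin n → ℝ) → ℝ) (j : Fin n) (x : Fin n → ℝ) : ℝ :=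
  fderiv ℝ f x (Pi.single j 1)

/-- Christoffel symbols of the metric `h` (with pointwise inverse `hinv`). -/
def christoffelSym (n : ℕ) (h hinv : (Fin n → ℝ) → Matrix (Fin n) (Fin n) ℝ)
    (x : Fin n → ℝ) (i j k : Fin n) : ℝ :=
  (1/2) * ∑ l, hinv x i l *
    (pderiv' n (fun y => h y l k) j x + pderiv' n (fun y => h y l j) k x
      - pderiv' n (fun y => h y j k) l x)

/-- The bilinear form of the metric `h` at `x`. -/
def hBil (n : ℕ) (h : (Fin n → ℝ) → Matrix (Fin n) (Fin n) ℝ)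
    (x v w : Fin n → ℝ) : ℝ := ∑ i, ∑ j, h x i j * v i * w j

/-- The `h`-norm of a tangent vector. -/
def hNorm (n : ℕ) (h : (Fin n → ℝ) → Matrix (Fin n) (Fin n) ℝ)
    (x v : Fin n → ℝ) : ℝ := Real.sqrt (hBil n h x v v)

/-- Length of the path `γ : [0,1] → ℝⁿ` w.r.t. the metric `h`. -/
def pathLen (n : ℕ) (h : (Fin n → ℝ) → Matrix (Fin n) (Fin n) ℝ)
    (γ : ℝ → Fin n → ℝ) : ℝ := ∫ t in (0:ℝ)..1, hNorm n h (γ t) (deriv γ t)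

/-- Riemannian distance associated to `h`. -/
def riemDist (n : ℕ) (h : (Fin n → ℝ) → Matrix (Fin n) (Fin n) ℝ)
    (p q : Fin n → ℝ) : ℝ :=
  sInf {L | ∃ γ : ℝ → Fin n → ℝ, ContDiff ℝ 1 γ ∧ γ 0 = p ∧ γ 1 = q ∧ L = pathLen n h γ}

/-- Metric completeness of `(ℝⁿ, h)`: every Cauchy sequence for the Riemannian
distance converges. -/
def RiemComplete (n : ℕ) (h : (Fin n → ℝ) → Matrix (Fin n) (Fin n) ℝ) : Prop :=
  ∀ f : ℕ → (Fin n → ℝ),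
    (∀ ε > 0, ∃ N, ∀ p ≥ N, ∀ q ≥ N, riemDist n h (f p) (f q) < ε) →
    ∃ y, Tendsto (fun m => riemDist n h (f m) y) atTop (nhds 0)

/-- The `i`-th component of the covariant derivative `D_{γ'} γ'` along `γ` at `t`. -/
def covD (n : ℕ) (h hinv : (Fin n → ℝ) → Matrix (Fin n) (Fin n) ℝ)
    (γ : ℝ → Fin n → ℝ) (t : ℝ) (i : Fin n) : ℝ :=
  deriv (deriv γ) t i +
    ∑ j, ∑ k, christoffelSym n h hinv (γ t) i j k * deriv γ t j * deriv γ t k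

/-- Riemannian gradient (indices raised with `hinv`). -/
def gradH (n : ℕ) (hinv : (Fin n → ℝ) → Matrix (Fin n) (Fin n) ℝ)
    (f : (Fin n → ℝ) → ℝ) (x : Fin n → ℝ) (i : Fin n) : ℝ :=
  ∑ j, hinv x i j * pderiv' n f j x

/-- Smoothness, symmetry, positive definiteness of the metric field `h`,
and `hinv` being its pointwise inverse. -/
def IsRiemMetric (n : ℕ) (h hinv : (Fin n → ℝ) → Matrix (Fin n) (Fin n) ℝ) : Prop :=
  (∀ i j, ContDiff ℝ (⊤ : ℕ∞) (fun x => h x i j)) ∧ (∀ i j, ContDiff ℝ (⊤ : ℕ∞) (fun x => hinv x i j)) ∧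
  (∀ x i j, h x i j = h x j i) ∧
  (∀ x v, v ≠ 0 → 0 < hBil n h x v v) ∧
  (∀ x, h x * hinv x = 1)


/-- The Brinkmann metric as a bilinear form on tangent vectors `(ξ, υ, ρ)`
at a point `(x, u, r)`:
`g = h_{ij} ξ₁ⁱ ξ₂ʲ − υ₁ρ₂ − υ₂ρ₁ + H(x,u) υ₁υ₂ + a_i(x,u)(υ₁ξ₂ⁱ + υ₂ξ₁ⁱ)`. -/
def brinkBil (n : ℕ) (h : (Fin n → ℝ) → Matrix (Fin n) (Fin n) ℝ)
    (H : (Fin n → ℝ) → ℝ → ℝ) (a : (Fin n → ℝ) → ℝ → Fin n → ℝ)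
    (p : (Fin n → ℝ) × ℝ × ℝ) (v w : (Fin n → ℝ) × ℝ × ℝ) : ℝ :=
  hBil n h p.1 v.1 w.1 - v.2.1 * w.2.2 - v.2.2 * w.2.1
    + H p.1 p.2.1 * v.2.1 * w.2.1
    + ∑ i, a p.1 p.2.1 i * (v.2.1 * w.1 i + w.2.1 * v.1 i)

/-- The null vector field `∂_r`. -/
def delr (n : ℕ) : (Fin n → ℝ) × ℝ × ℝ := ((fun _ => 0), 0, 1)

/-- In the Brinkmann spacetime (with `∂_r` future directed):
the coordinate `u` is non-decreasing along future-directed causal curves,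
strictly increasing along future-directed timelike curves, and hence the
spacetime is chronological (no closed timelike curves). -/
theorem brinkmann_u_monotone_and_chronological
    (n : ℕ) (h hinv : (Fin n → ℝ) → Matrix (Fin n) (Fin n) ℝ)
    (hmet : IsRiemMetric n h hinv)
    (H : (Fin n → ℝ) → ℝ → ℝ) (a : (Fin n → ℝ) → ℝ → Fin n → ℝ)
    (hH : ContDiff ℝ (⊤ : ℕ∞) (fun p : (Fin n → ℝ) × ℝ => H p.1 p.2))
    (ha : ∀ i, ContDiff ℝ (⊤ : ℕ∞) (fun p : (Fin n → ℝ) × ℝ => a p.1 p.2 i)) :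
    -- (1) u is non-decreasing along future-directed causal curves
    (∀ c : ℝ → (Fin n → ℝ) × ℝ × ℝ, Differentiable ℝ c →
      (∀ t, brinkBil n h H a (c t) (deriv c t) (deriv c t) ≤ 0) →
      (∀ t, deriv c t ≠ 0) →
      (∀ t, brinkBil n h H a (c t) (deriv c t) (delr n) ≤ 0) →
      Monotone (fun t => (c t).2.1)) ∧
    -- (2) u is strictly increasing along future-directed timelike curves
    (∀ c : ℝ → (Fin n → ℝ) × ℝ × ℝ, Differentiable ℝ c →
      (∀ t, brinkBil n h H a (c t) (deriv c t) (deriv c t) < 0) →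
      (∀ t, brinkBil n h H a (c t) (deriv c t) (delr n) ≤ 0) →
      StrictMono (fun t => (c t).2.1)) ∧
    -- (3) chronological: there is no closed future-directed timelike curve
    (¬ ∃ (c : ℝ → (Fin n → ℝ) × ℝ × ℝ) (t₀ t₁ : ℝ), Differentiable ℝ c ∧ t₀ < t₁ ∧
      (∀ t, brinkBil n h H a (c t) (deriv c t) (deriv c t) < 0) ∧
      (∀ t, brinkBil n h H a (c t) (deriv c t) (delr n) ≤ 0) ∧
      c t₀ = c t₁) := by

  -- helper: derivative of the u-component
  have hderivU : ∀ (c : ℝ → (Fin n → ℝ) × ℝ × ℝ), Differentiable ℝ c → ∀ t,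
      deriv (fun t => (c t).2.1) t = (deriv c t).2.1 := by
    intro c hc t
    have hL : HasDerivAt (fun t => (c t).2.1) (deriv c t).2.1 t :=
      ((ContinuousLinearMap.fst ℝ ℝ ℝ).comp
        (ContinuousLinearMap.snd ℝ (Fin n → ℝ) (ℝ × ℝ))).hasFDerivAt.comp_hasDerivAt t
        (hc t).hasDerivAt
    exact hL.deriv
  -- u' ≥ 0 from the future-directed condition
  have hfut_nonneg : ∀ (c : ℝ → (Fin n → ℝ) × ℝ × ℝ) (t : ℝ),
      brinkBil n h H a (c t) (deriv c t) (delr n) ≤ 0 → 0 ≤ (deriv c t).2.1 := by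
    intro c t hle
    have : brinkBil n h H a (c t) (deriv c t) (delr n) = -(deriv c t).2.1 := by
      simp [brinkBil, hBil, delr]
    linarith [this ▸ hle]
  -- hBil is nonnegative
  have hBil_nonneg : ∀ x v, 0 ≤ hBil n h x v v := by
    intro x v
    rcases eq_or_ne v 0 with rfl | hv
    · simp [hBil]
    · exact (hmet.2.2.2.1 x v hv).le
  -- strict positivity of u' along timelike future-directed curves
  have key : ∀ (c : ℝ → (Fin n → ℝ) × ℝ × ℝ), Differentiable ℝ c →
      (∀ t, brinkBil n h H a (c t) (deriv c t) (deriv c t) < 0) →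
      (∀ t, brinkBil n h H a (c t) (deriv c t) (delr n) ≤ 0) →
      ∀ t, 0 < (deriv c t).2.1 := by
    intro c hc htl hfut t
    have h0 := hfut_nonneg c t (hfut t)
    rcases h0.lt_or_eq with h1 | h1
    · exact h1
    · exfalso
      have h2 := htl t
      have h3 : brinkBil n h H a (c t) (deriv c t) (deriv c t)
          = hBil n h (c t).1 (deriv c t).1 (deriv c t).1 := by
        simp [brinkBil, ← h1]
      have := hBil_nonneg (c t).1 (deriv c t).1
      linarith [h3 ▸ h2]
  have part2 : ∀ c : ℝ → (Fin n → ℝ) × ℝ × ℝ, Differentiable ℝ c →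
      (∀ t, brinkBil n h H a (c t) (deriv c t) (deriv c t) < 0) →
      (∀ t, brinkBil n h H a (c t) (deriv c t) (delr n) ≤ 0) →
      StrictMono (fun t => (c t).2.1) := by
    intro c hc htl hfut
    apply strictMono_of_deriv_pos
    intro t
    rw [hderivU c hc t]
    exact key c hc htl hfut t
  refine ⟨?_, part2, ?_⟩
  · intro c hc _ _ hfut
    apply monotone_of_deriv_nonneg
    · intro t
      exact (((ContinuousLinearMap.fst ℝ ℝ ℝ).comp
        (ContinuousLinearMap.snd ℝ (Fin n → ℝ) (ℝ × ℝ))).hasFDerivAt.comp_hasDerivAt t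
        (hc t).hasDerivAt).differentiableAt
    · intro t
      rw [hderivU c hc t]
      exact hfut_nonneg c t (hfut t)
  · rintro ⟨c, t₀, t₁, hc, hlt, htl, hfut, hcl⟩
    have := part2 c hc htl hfut hlt
    simp only [hcl] at this
    exact lt_irrefl _ this
end
end

section
/- A curve γ = (x, u, r): (−a, a) → M with constant energy E_γ = g(γ', γ') and initial data γ(0) = (x₀, u₀, r₀), γ'(0) = (ẋ₀, u̇₀, ṙ₀) with u̇₀ ≠ 0 is a geodesic of the Brinkmann metric if and only if: (a) u(s) = u₀ + s·u̇₀; (b) x solves D_{ẋ}ẋ^i = −h^{ik}(a_{k,j} − a_{j,k}) ẋ^j u̇₀ − (1/2) h^{ik}(2 a_{k,u} − H_{,k}) u̇₀², where D is the Levi-Civita connection of (N,h); and (c) r(s) = r₀ − (1/(2u̇₀)) ∫₀^s [E_γ − h(ẋ(σ), ẋ(σ)) − u̇₀² H(x(σ),u(σ)) − 2u̇₀ a_i(x(σ),u(σ)) ẋ^i(σ)] dσ. -/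
open MeasureTheory Filter Set

noncomputable section

/-- Spatial partial derivative `H_{,k}` of a function `H(x,u)`. -/
def pdx (n : ℕ) (H : (Fin n → ℝ) → ℝ → ℝ) (k : Fin n) (x : Fin n → ℝ) (u : ℝ) : ℝ :=
  pderiv' n (fun y => H y u) k x

/-- `u`-derivative `H_{,u}` of a function `H(x,u)`. -/
def pdu (n : ℕ) (H : (Fin n → ℝ) → ℝ → ℝ) (x : Fin n → ℝ) (u : ℝ) : ℝ :=
  deriv (fun w => H x w) u

lemma clm_apply_eq_sum {n : ℕ} (L : (Fin n → ℝ) →L[ℝ] ℝ) (v : Fin n → ℝ) :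
    L v = ∑ j, v j * L (Pi.single j 1) := by
  have hv : v = ∑ j, (v j) • (Pi.single j (1:ℝ) : Fin n → ℝ) := by
    funext k; simp [Finset.sum_apply, Pi.single_apply]
  conv_lhs => rw [hv]
  rw [map_sum]
  exact Finset.sum_congr rfl fun j _ => by rw [ContinuousLinearMap.map_smul, smul_eq_mul]

lemma hasDerivAt_comp_vec {n : ℕ} (f : (Fin n → ℝ) → ℝ) (hf : ContDiff ℝ (⊤ : ℕ∞) f)
    (x : ℝ → Fin n → ℝ) (hx : Differentiable ℝ x) (s : ℝ) :
    HasDerivAt (fun t => f (x t)) (∑ j, pderiv' n f j (x s) * deriv x s j) s := by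
  have h1 : HasDerivAt (fun t => f (x t)) (fderiv ℝ f (x s) (deriv x s)) s :=
    (hf.differentiable (by simp) (x s)).hasFDerivAt.comp_hasDerivAt s (hx s).hasDerivAt
  have h2 : fderiv ℝ f (x s) (deriv x s) = ∑ j, pderiv' n f j (x s) * deriv x s j := by
    rw [clm_apply_eq_sum]
    exact Finset.sum_congr rfl fun j _ => by rw [pderiv', mul_comm]
  rwa [h2] at h1

lemma pdx_eq_fderiv {n : ℕ} (H : (Fin n → ℝ) → ℝ → ℝ)
    (hH : ContDiff ℝ (⊤ : ℕ∞) (fun p : (Fin n → ℝ) × ℝ => H p.1 p.2)) (k : Fin n)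
    (x : Fin n → ℝ) (u : ℝ) :
    pdx n H k x u = fderiv ℝ (fun p : (Fin n → ℝ) × ℝ => H p.1 p.2) (x, u) (Pi.single k 1, 0) := by
  have h1 : HasFDerivAt (fun y : Fin n → ℝ => H y u)
      ((fderiv ℝ (fun p : (Fin n → ℝ) × ℝ => H p.1 p.2) (x, u)).comp
        (ContinuousLinearMap.inl ℝ (Fin n → ℝ) ℝ)) x :=
    by have := ((hH.differentiable (by simp) (x, u)).hasFDerivAt).comp x (hasFDerivAt_prodMk_left (𝕜 := ℝ) x u); exact this
  rw [pdx, pderiv', h1.fderiv]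
  rfl

lemma pdu_eq_fderiv {n : ℕ} (H : (Fin n → ℝ) → ℝ → ℝ)
    (hH : ContDiff ℝ (⊤ : ℕ∞) (fun p : (Fin n → ℝ) × ℝ => H p.1 p.2))
    (x : Fin n → ℝ) (u : ℝ) :
    pdu n H x u = fderiv ℝ (fun p : (Fin n → ℝ) × ℝ => H p.1 p.2) (x, u) (0, 1) := by
  have h1 : HasFDerivAt (fun w : ℝ => H x w)
      ((fderiv ℝ (fun p : (Fin n → ℝ) × ℝ => H p.1 p.2) (x, u)).comp
        (ContinuousLinearMap.inr ℝ (Fin n → ℝ) ℝ)) u :=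
    ((hH.differentiable (by simp) (x, u)).hasFDerivAt).comp u (hasFDerivAt_prodMk_right x u)
  rw [pdu, h1.hasDerivAt.deriv]
  rfl

lemma hasDerivAt_comp_vec2 {n : ℕ} (H : (Fin n → ℝ) → ℝ → ℝ)
    (hH : ContDiff ℝ (⊤ : ℕ∞) (fun p : (Fin n → ℝ) × ℝ => H p.1 p.2))
    (x : ℝ → Fin n → ℝ) (u : ℝ → ℝ) (hx : Differentiable ℝ x) (hu : Differentiable ℝ u)
    (s : ℝ) :
    HasDerivAt (fun t => H (x t) (u t))
      ((∑ j, pdx n H j (x s) (u s) * deriv x s j) + pdu n H (x s) (u s) * deriv u s) s := by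
  set Φ := fun p : (Fin n → ℝ) × ℝ => H p.1 p.2 with hΦ
  set L := fderiv ℝ Φ (x s, u s) with hL
  have hc : HasDerivAt (fun t => (x t, u t)) (deriv x s, deriv u s) s :=
    (hx s).hasDerivAt.prodMk (hu s).hasDerivAt
  have h1 : HasDerivAt (fun t => H (x t) (u t)) (L (deriv x s, deriv u s)) s :=
    by have := ((hH.differentiable (by simp) (x s, u s)).hasFDerivAt).comp_hasDerivAt s hc; exact this
  have hsplit : L (deriv x s, deriv u s)
      = (∑ j, pdx n H j (x s) (u s) * deriv x s j) + pdu n H (x s) (u s) * deriv u s := by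
    have hdec : (deriv x s, deriv u s) = (deriv x s, (0:ℝ)) + ((0 : Fin n → ℝ), deriv u s) := by
      simp
    rw [hdec, map_add]
    congr 1
    · have : L (deriv x s, (0:ℝ)) = (L.comp (ContinuousLinearMap.inl ℝ (Fin n → ℝ) ℝ)) (deriv x s) := rfl
      rw [this, clm_apply_eq_sum]
      refine Finset.sum_congr rfl fun j _ => ?_
      rw [pdx_eq_fderiv H hH, mul_comm]
      rfl
    · have : L ((0 : Fin n → ℝ), deriv u s)
          = deriv u s • L ((0 : Fin n → ℝ), 1) := by
        rw [← ContinuousLinearMap.map_smul]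
        congr 1
        simp [Prod.smul_mk]
      rw [this, pdu_eq_fderiv H hH, smul_eq_mul, mul_comm]
  rwa [hsplit] at h1

lemma bk_deriv2_comp {n : ℕ} (x : ℝ → Fin n → ℝ) (hx : ContDiff ℝ 2 x) (s : ℝ) (i : Fin n) :
    HasDerivAt (fun t => deriv x t i) (deriv (deriv x) s i) s := by
  have h2 : ContDiff ℝ ((1 : WithTop ℕ∞) + 1) x := by
    exact hx
  have h1 : Differentiable ℝ (deriv x) :=
    ((contDiff_succ_iff_deriv.mp h2).2.2).differentiable (by simp)
  exact hasDerivAt_pi.mp ((h1 s).hasDerivAt) i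

lemma bk_diff_deriv {n : ℕ} (x : ℝ → Fin n → ℝ) (hx : ContDiff ℝ 2 x) :
    Differentiable ℝ (deriv x) := by
  have h2 : ContDiff ℝ ((1 : WithTop ℕ∞) + 1) x := by
    exact hx
  exact ((contDiff_succ_iff_deriv.mp h2).2.2).differentiable (by simp)

lemma bk_cont_deriv2 {n : ℕ} (x : ℝ → Fin n → ℝ) (hx : ContDiff ℝ 2 x) :
    Continuous (deriv x) := (bk_diff_deriv x hx).continuous

lemma bk_const_of_deriv_zero {f : ℝ → ℝ} {A B : ℝ} (hf : Differentiable ℝ f)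
    (h0 : ∀ t ∈ Ioo A B, deriv f t = 0) {s : ℝ} (hs : s ∈ Ioo A B)
    (h0m : (0:ℝ) ∈ Ioo A B) : f s = f 0 := by
  refine (convex_Ioo A B).is_const_of_fderivWithin_eq_zero hf.differentiableOn
    (fun t ht => ?_) hs h0m
  rw [fderivWithin_of_isOpen isOpen_Ioo ht]
  ext y
  simp [h0 t ht]

lemma bk_hasDerivAt_hBil {n : ℕ} (h : (Fin n → ℝ) → Matrix (Fin n) (Fin n) ℝ)
    (hsm : ∀ i j, ContDiff ℝ (⊤ : ℕ∞) (fun y => h y i j))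
    (x : ℝ → Fin n → ℝ) (hx : ContDiff ℝ 2 x) (s : ℝ) :
    HasDerivAt (fun t => hBil n h (x t) (deriv x t) (deriv x t))
      (∑ i, ∑ j,
        ((∑ l, pderiv' n (fun y => h y i j) l (x s) * deriv x s l) * deriv x s i * deriv x s j
         + h (x s) i j * deriv (deriv x) s i * deriv x s j
         + h (x s) i j * deriv x s i * deriv (deriv x) s j)) s := by
  unfold hBil
  refine HasDerivAt.fun_sum fun i _ => HasDerivAt.fun_sum fun j _ => ?_
  have h1 := hasDerivAt_comp_vec (fun y => h y i j) (hsm i j) x (hx.differentiable (by norm_num)) s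
  have h2 := bk_deriv2_comp x hx s i
  have h3 := bk_deriv2_comp x hx s j
  have h4 := (h1.fun_mul h2).fun_mul h3
  refine h4.congr_deriv ?_
  ring

lemma bk_contr {n : ℕ} {h hinv : (Fin n → ℝ) → Matrix (Fin n) (Fin n) ℝ}
    (hunit : ∀ y, h y * hinv y = 1) (y : Fin n → ℝ) (j k : Fin n) :
    ∑ i, h y j i * hinv y i k = if j = k then (1:ℝ) else 0 := by
  have h1 := congrArg (fun M : Matrix (Fin n) (Fin n) ℝ => M j k) (hunit y)
  simpa [Matrix.mul_apply, Matrix.one_apply] using h1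

lemma bk_hinv_symm {n : ℕ} {h hinv : (Fin n → ℝ) → Matrix (Fin n) (Fin n) ℝ}
    (hsymm : ∀ y i j, h y i j = h y j i) (hunit : ∀ y, h y * hinv y = 1)
    (y : Fin n → ℝ) (i j : Fin n) : hinv y i j = hinv y j i := by
  have h1 : hinv y = (h y)⁻¹ := (Matrix.inv_eq_right_inv (hunit y)).symm
  have h2 : Matrix.transpose (h y) = h y := by
    ext a b; simp [Matrix.transpose_apply, hsymm y b a]
  have h3 : Matrix.transpose (hinv y) = hinv y := by
    rw [h1, Matrix.transpose_nonsing_inv, h2]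
  have h4 := congrArg (fun M : Matrix (Fin n) (Fin n) ℝ => M i j) h3
  simpa [Matrix.transpose_apply] using h4.symm


lemma bk_antisym_sum {n : ℕ} (F : Fin n → Fin n → ℝ) (hF : ∀ j k, F j k = - F k j) :
    ∑ j, ∑ k, F j k = 0 := by
  have h1 : ∑ j, ∑ k, F j k = ∑ j, ∑ k, (- F k j) :=
    Finset.sum_congr rfl fun j _ => Finset.sum_congr rfl fun k _ => hF j k
  have h2 : ∑ j : Fin n, ∑ k : Fin n, (- F k j) = - ∑ j, ∑ k, F j k := by
    rw [Finset.sum_comm]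
    simp
  linarith [h1.trans h2]

section key
variable {n : ℕ} (g gi : Matrix (Fin n) (Fin n) ℝ)

lemma bk_K2 (gsym : ∀ i j, g i j = g j i)
    (contr : ∀ j k, ∑ m, g j m * gi m k = if j = k then (1:ℝ) else 0)
    (v B : Fin n → ℝ) :
    ∑ i, (∑ k, gi i k * B k) * (∑ j, g i j * v j) = ∑ k, B k * v k := by
  have step1 : ∀ i, (∑ k, gi i k * B k) * (∑ j, g i j * v j)
      = ∑ k, ∑ j, (g j i * gi i k) * (B k * v j) := by
    intro i
    rw [Finset.sum_mul]
    refine Finset.sum_congr rfl fun k _ => ?_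
    rw [Finset.mul_sum]
    exact Finset.sum_congr rfl fun j _ => by rw [gsym i j]; ring
  calc ∑ i, (∑ k, gi i k * B k) * (∑ j, g i j * v j)
      = ∑ i, ∑ k, ∑ j, (g j i * gi i k) * (B k * v j) :=
        Finset.sum_congr rfl fun i _ => step1 i
    _ = ∑ k, ∑ j, (∑ i, g j i * gi i k) * (B k * v j) := by
        rw [Finset.sum_comm]
        refine Finset.sum_congr rfl fun k _ => ?_
        rw [Finset.sum_comm]
        refine Finset.sum_congr rfl fun j _ => ?_
        rw [Finset.sum_mul]
    _ = ∑ k, B k * v k := by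
        refine Finset.sum_congr rfl fun k _ => ?_
        simp_rw [contr]
        simp [Finset.sum_ite_eq]
end key

lemma bk_sum3_cycle {n : ℕ} (f : Fin n → Fin n → Fin n → ℝ) :
    ∑ a, ∑ b, ∑ c, f a b c = ∑ c, ∑ a, ∑ b, f a b c := by
  rw [show (∑ a, ∑ b, ∑ c, f a b c) = ∑ a, ∑ c, ∑ b, f a b c from
    Finset.sum_congr rfl fun a _ => Finset.sum_comm, Finset.sum_comm]

lemma bk_sum3_cycle' {n : ℕ} (f : Fin n → Fin n → Fin n → ℝ) :
    ∑ a, ∑ b, ∑ c, f a b c = ∑ b, ∑ c, ∑ a, f a b c := by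
  rw [Finset.sum_comm]
  exact Finset.sum_congr rfl fun b _ => Finset.sum_comm

lemma bk_sum3_swap23 {n : ℕ} (f : Fin n → Fin n → Fin n → ℝ) :
    ∑ a, ∑ b, ∑ c, f a b c = ∑ a, ∑ c, ∑ b, f a b c :=
  Finset.sum_congr rfl fun a _ => Finset.sum_comm

section key1
variable {n : ℕ} (g gi : Matrix (Fin n) (Fin n) ℝ)

lemma bk_gGamma (gsym : ∀ i j, g i j = g j i)
    (contr : ∀ j k, ∑ m, g j m * gi m k = if j = k then (1:ℝ) else 0)
    (D : Fin n → Fin n → Fin n → ℝ) (Γ : Fin n → Fin n → Fin n → ℝ)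
    (hΓ : ∀ i j k, Γ i j k = (1/2) * ∑ l, gi i l * (D j l k + D k l j - D l j k))
    (j a b : Fin n) :
    ∑ i, g j i * Γ i a b = (1/2) * (D a j b + D b j a - D j a b) := by
  calc ∑ i, g j i * Γ i a b
      = ∑ i, ∑ l, (g j i * gi i l) * ((1/2) * (D a l b + D b l a - D l a b)) := by
        refine Finset.sum_congr rfl fun i _ => ?_
        rw [hΓ]
        rw [Finset.mul_sum]
        rw [Finset.mul_sum]
        exact Finset.sum_congr rfl fun l _ => by ring
    _ = ∑ l, (∑ i, g j i * gi i l) * ((1/2) * (D a l b + D b l a - D l a b)) := by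
        rw [Finset.sum_comm]
        exact Finset.sum_congr rfl fun l _ => (Finset.sum_mul _ _ _).symm
    _ = (1/2) * (D a j b + D b j a - D j a b) := by
        simp_rw [contr]
        simp [Finset.sum_ite_eq]

lemma bk_K1 (gsym : ∀ i j, g i j = g j i)
    (contr : ∀ j k, ∑ m, g j m * gi m k = if j = k then (1:ℝ) else 0)
    (D : Fin n → Fin n → Fin n → ℝ) (v : Fin n → ℝ)
    (Γ : Fin n → Fin n → Fin n → ℝ)
    (hΓ : ∀ i j k, Γ i j k = (1/2) * ∑ l, gi i l * (D j l k + D k l j - D l j k)) :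
    ∑ i, (∑ a, ∑ b, Γ i a b * v a * v b) * (∑ j, g i j * v j)
      = (1/2) * ∑ i, ∑ j, (∑ l, D l i j * v l) * v i * v j := by
  have hS : ∑ i, ∑ j, (∑ l, D l i j * v l) * v i * v j
      = ∑ p, ∑ q, ∑ r, D p q r * v p * v q * v r := by
    calc ∑ i, ∑ j, (∑ l, D l i j * v l) * v i * v j
        = ∑ i, ∑ j, ∑ l, D l i j * (v l * v i * v j) := by
          refine Finset.sum_congr rfl fun i _ => Finset.sum_congr rfl fun j _ => ?_
          rw [Finset.sum_mul, Finset.sum_mul]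
          exact Finset.sum_congr rfl fun l _ => by ring
      _ = ∑ p, ∑ q, ∑ r, D p q r * v p * v q * v r := by
          rw [bk_sum3_cycle]
          exact Finset.sum_congr rfl fun p _ => Finset.sum_congr rfl fun q _ =>
            Finset.sum_congr rfl fun r _ => by ring
  have step1 : ∑ i, (∑ a, ∑ b, Γ i a b * v a * v b) * (∑ j, g i j * v j)
      = ∑ a, ∑ b, ∑ j, (∑ i, g j i * Γ i a b) * (v a * v b * v j) := by
    calc ∑ i, (∑ a, ∑ b, Γ i a b * v a * v b) * (∑ j, g i j * v j)
        = ∑ i, ∑ a, ∑ b, ∑ j, (g j i * Γ i a b) * (v a * v b * v j) := by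
          refine Finset.sum_congr rfl fun i _ => ?_
          rw [Finset.sum_mul]
          refine Finset.sum_congr rfl fun a _ => ?_
          rw [Finset.sum_mul]
          refine Finset.sum_congr rfl fun b _ => ?_
          rw [Finset.mul_sum]
          exact Finset.sum_congr rfl fun j _ => by rw [gsym i j]; ring
      _ = ∑ a, ∑ i, ∑ b, ∑ j, (g j i * Γ i a b) * (v a * v b * v j) := Finset.sum_comm
      _ = ∑ a, ∑ b, ∑ i, ∑ j, (g j i * Γ i a b) * (v a * v b * v j) :=
          Finset.sum_congr rfl fun a _ => Finset.sum_comm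
      _ = ∑ a, ∑ b, ∑ j, ∑ i, (g j i * Γ i a b) * (v a * v b * v j) :=
          Finset.sum_congr rfl fun a _ => Finset.sum_congr rfl fun b _ => Finset.sum_comm
      _ = ∑ a, ∑ b, ∑ j, (∑ i, g j i * Γ i a b) * (v a * v b * v j) :=
          Finset.sum_congr rfl fun a _ => Finset.sum_congr rfl fun b _ =>
            Finset.sum_congr rfl fun j _ => (Finset.sum_mul _ _ _).symm
  rw [step1, hS]
  calc ∑ a, ∑ b, ∑ j, (∑ i, g j i * Γ i a b) * (v a * v b * v j)
      = ∑ a, ∑ b, ∑ j,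
          ((1/2) * (D a j b * v a * v b * v j) + (1/2) * (D b j a * v a * v b * v j)
            - (1/2) * (D j a b * v a * v b * v j)) := by
        refine Finset.sum_congr rfl fun a _ => Finset.sum_congr rfl fun b _ =>
          Finset.sum_congr rfl fun j _ => ?_
        rw [bk_gGamma g gi gsym contr D Γ hΓ]
        ring
    _ = (1/2) * (∑ a, ∑ b, ∑ j, D a j b * v a * v b * v j)
        + (1/2) * (∑ a, ∑ b, ∑ j, D b j a * v a * v b * v j)
        - (1/2) * (∑ a, ∑ b, ∑ j, D j a b * v a * v b * v j) := by
        simp [Finset.sum_add_distrib, Finset.sum_sub_distrib, Finset.mul_sum]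
    _ = (1/2) * ∑ p, ∑ q, ∑ r, D p q r * v p * v q * v r := by
        have e1 : ∑ a, ∑ b, ∑ j, D a j b * v a * v b * v j
            = ∑ p, ∑ q, ∑ r, D p q r * v p * v q * v r := by
          rw [bk_sum3_swap23]
          exact Finset.sum_congr rfl fun p _ => Finset.sum_congr rfl fun q _ =>
            Finset.sum_congr rfl fun r _ => by ring
        have e2 : ∑ a, ∑ b, ∑ j, D b j a * v a * v b * v j
            = ∑ p, ∑ q, ∑ r, D p q r * v p * v q * v r := by
          rw [bk_sum3_cycle']
          exact Finset.sum_congr rfl fun p _ => Finset.sum_congr rfl fun q _ =>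
            Finset.sum_congr rfl fun r _ => by ring
        have e3 : ∑ a, ∑ b, ∑ j, D j a b * v a * v b * v j
            = ∑ p, ∑ q, ∑ r, D p q r * v p * v q * v r := by
          rw [bk_sum3_cycle]
          exact Finset.sum_congr rfl fun p _ => Finset.sum_congr rfl fun q _ =>
            Finset.sum_congr rfl fun r _ => by ring
        rw [e1, e2, e3]
        ring
end key1

section keymain
variable {n : ℕ} (g gi : Matrix (Fin n) (Fin n) ℝ)

lemma bk_key_algebra (gsym : ∀ i j, g i j = g j i) (gisym : ∀ i j, gi i j = gi j i)
    (contr : ∀ j k, ∑ m, g j m * gi m k = if j = k then (1:ℝ) else 0)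
    (D : Fin n → Fin n → Fin n → ℝ)
    (v w A P Qu : Fin n → ℝ) (Q : Fin n → Fin n → ℝ) (Pu c : ℝ) (hc : c ≠ 0)
    (Γ : Fin n → Fin n → Fin n → ℝ)
    (hΓ : ∀ i j k, Γ i j k = (1/2) * ∑ l, gi i l * (D j l k + D k l j - D l j k))
    (weq : ∀ i, w i =
      -(∑ a, ∑ b, Γ i a b * v a * v b)
      - (∑ a, ∑ b, gi i b * (Q b a - Q a b) * v a) * c
      - (1/2) * (∑ b, gi i b * (2 * Qu b - P b)) * c^2) :
    ((∑ i, ∑ j, ((∑ l, D l i j * v l) * v i * v j + g i j * w i * v j + g i j * v i * w j))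
      + ((∑ j, P j * v j) + Pu * c) * c^2
      + 2 * c * (∑ i, (((∑ j, Q i j * v j) + Qu i * c) * v i + A i * w i))) / (2*c)
    = (∑ i, ∑ j, ((1/2) * (Q i j + Q j i) - ∑ k, Γ k i j * A k) * v i * v j)
      - (∑ j, ((∑ i, (∑ k, gi i k * A k) * (Q i j - Q j i)) - P j) * c * v j)
      - ((∑ i, (∑ k, gi i k * A k) * (Qu i - (1/2) * P i)) - (1/2) * Pu) * c^2 := by
  have hc2 : (2:ℝ) * c ≠ 0 := mul_ne_zero two_ne_zero hc
  rw [div_eq_iff hc2]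
  -- abbreviations
  set X : Fin n → ℝ := fun i => ∑ a, ∑ b, Γ i a b * v a * v b with hX
  set Y : Fin n → ℝ := fun i => ∑ a, ∑ b, gi i b * (Q b a - Q a b) * v a with hY
  set Z : Fin n → ℝ := fun i => ∑ b, gi i b * (2 * Qu b - P b) with hZ
  set G : Fin n → ℝ := fun i => ∑ j, g i j * v j with hG
  set S0 : ℝ := ∑ i, ∑ j, (∑ l, D l i j * v l) * v i * v j with hS0
  set SP : ℝ := ∑ j, P j * v j with hSP
  set SQu : ℝ := ∑ k, Qu k * v k with hSQu
  set SQ : ℝ := ∑ i, ∑ j, Q i j * v i * v j with hSQ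
  set SX : ℝ := ∑ i, A i * X i with hSX
  set SY : ℝ := ∑ i, A i * Y i with hSY
  set SZ : ℝ := ∑ i, A i * Z i with hSZ
  -- w in terms of X Y Z
  have weq' : ∀ i, w i = -(X i) - Y i * c - (1/2) * Z i * c^2 := fun i => by
    rw [weq i, hX, hY, hZ]
  -- Y i = ∑_k gi i k * (∑_j (Q k j - Q j k) * v j)
  have hYalt : ∀ i, Y i = ∑ b, gi i b * (∑ a, (Q b a - Q a b) * v a) := by
    intro i
    rw [hY]
    simp only []
    rw [Finset.sum_comm]
    exact Finset.sum_congr rfl fun b _ => by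
      rw [Finset.mul_sum]
      exact Finset.sum_congr rfl fun a _ => by ring
  -- K1 : ∑ X i * G i = (1/2) S0
  have K1 : ∑ i, X i * G i = (1/2) * S0 :=
    bk_K1 g gi gsym contr D v Γ hΓ
  -- K2 applications
  have K2Y : ∑ i, Y i * G i = 0 := by
    have h1 : ∑ i, Y i * G i
        = ∑ i, (∑ b, gi i b * (∑ a, (Q b a - Q a b) * v a)) * G i :=
      Finset.sum_congr rfl fun i _ => by rw [hYalt i]
    rw [h1, bk_K2 g gi gsym contr v (fun b => ∑ a, (Q b a - Q a b) * v a)]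
    have h2 : ∑ k, (∑ a, (Q k a - Q a k) * v a) * v k
        = ∑ k, ∑ a, (Q k a - Q a k) * v a * v k :=
      Finset.sum_congr rfl fun k _ => by rw [Finset.sum_mul]
    rw [h2]
    exact bk_antisym_sum _ (fun j k => by ring)
  have K2Z : ∑ i, Z i * G i = 2 * SQu - SP := by
    rw [show (∑ i, Z i * G i) = ∑ i, (∑ b, gi i b * ((fun k => 2 * Qu k - P k) b)) * G i from rfl,
      bk_K2 g gi gsym contr v (fun k => 2 * Qu k - P k)]
    rw [hSQu, hSP]
    rw [Finset.sum_congr rfl (fun k (_ : k ∈ Finset.univ) =>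
      show (2 * Qu k - P k) * v k = 2 * (Qu k * v k) - P k * v k by ring)]
    rw [Finset.sum_sub_distrib, ← Finset.mul_sum]
  -- the three main sum splits
  have E1 : (∑ i, ∑ j, ((∑ l, D l i j * v l) * v i * v j + g i j * w i * v j + g i j * v i * w j))
      = S0 + 2 * ∑ i, w i * G i := by
    have h1 : ∀ i, (∑ j, ((∑ l, D l i j * v l) * v i * v j + g i j * w i * v j + g i j * v i * w j))
        = (∑ j, (∑ l, D l i j * v l) * v i * v j) + (∑ j, g i j * w i * v j)
          + (∑ j, g i j * v i * w j) := by
      intro i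
      rw [Finset.sum_add_distrib, Finset.sum_add_distrib]
    rw [Finset.sum_congr rfl fun i (_ : i ∈ Finset.univ) => h1 i]
    rw [Finset.sum_add_distrib, Finset.sum_add_distrib]
    have h2 : ∑ i, ∑ j, g i j * w i * v j = ∑ i, w i * G i := by
      refine Finset.sum_congr rfl fun i _ => ?_
      rw [hG]
      simp only []
      rw [Finset.mul_sum]
      exact Finset.sum_congr rfl fun j _ => by ring
    have h3 : ∑ i, ∑ j, g i j * v i * w j = ∑ i, w i * G i := by
      rw [Finset.sum_comm]
      refine Finset.sum_congr rfl fun j _ => ?_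
      rw [hG]
      simp only []
      rw [Finset.mul_sum]
      exact Finset.sum_congr rfl fun i _ => by rw [gsym i j]; ring
    rw [h2, h3, hS0]
    ring
  have EW : ∑ i, w i * G i = -((1/2) * S0) - (1/2) * (2 * SQu - SP) * c^2 := by
    have h1 : ∀ i, w i * G i
        = -(X i * G i) - (Y i * G i) * c - ((Z i * G i) * c^2) * (1/2) := by
      intro i; rw [weq' i]; ring
    rw [Finset.sum_congr rfl fun i (_ : i ∈ Finset.univ) => h1 i]
    rw [Finset.sum_sub_distrib, Finset.sum_sub_distrib, Finset.sum_neg_distrib,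
      ← Finset.sum_mul, ← Finset.sum_mul, ← Finset.sum_mul, K1, K2Y, K2Z]
    ring
  have EAW : ∑ i, A i * w i = -SX - SY * c - (1/2) * SZ * c^2 := by
    have h1 : ∀ i, A i * w i
        = -(A i * X i) - (A i * Y i) * c - ((A i * Z i) * c^2) * (1/2) := by
      intro i; rw [weq' i]; ring
    rw [Finset.sum_congr rfl fun i (_ : i ∈ Finset.univ) => h1 i]
    rw [Finset.sum_sub_distrib, Finset.sum_sub_distrib, Finset.sum_neg_distrib,
      ← Finset.sum_mul, ← Finset.sum_mul, ← Finset.sum_mul, ← hSX, ← hSY, ← hSZ]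
    ring
  have E2 : (∑ i, (((∑ j, Q i j * v j) + Qu i * c) * v i + A i * w i))
      = SQ + SQu * c + ∑ i, A i * w i := by
    have h1 : ∀ i, ((∑ j, Q i j * v j) + Qu i * c) * v i + A i * w i
        = (∑ j, Q i j * v i * v j) + (Qu i * v i) * c + A i * w i := by
      intro i
      rw [add_mul, Finset.sum_mul]
      rw [Finset.sum_congr rfl fun j (_ : j ∈ Finset.univ) =>
        show Q i j * v j * v i = Q i j * v i * v j by ring]
      ring
    rw [Finset.sum_congr rfl fun i (_ : i ∈ Finset.univ) => h1 i]
    rw [Finset.sum_add_distrib, Finset.sum_add_distrib, ← Finset.sum_mul, ← hSQ, ← hSQu]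
  -- RHS pieces
  have M1 : (∑ i, ∑ j, ((1/2) * (Q i j + Q j i) - ∑ k, Γ k i j * A k) * v i * v j)
      = SQ - SX := by
    have h1 : ∀ i j, ((1/2) * (Q i j + Q j i) - ∑ k, Γ k i j * A k) * v i * v j
        = ((1/2) * (Q i j * v i * v j) + (1/2) * (Q j i * v i * v j))
          - ∑ k, A k * (Γ k i j * v i * v j) := by
      intro i j
      have e : (∑ k, Γ k i j * A k) * (v i * v j) = ∑ k, A k * (Γ k i j * v i * v j) := by
        rw [Finset.sum_mul]
        exact Finset.sum_congr rfl fun k _ => by ring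
      calc ((1/2) * (Q i j + Q j i) - ∑ k, Γ k i j * A k) * v i * v j
          = (1/2) * (Q i j * v i * v j) + (1/2) * (Q j i * v i * v j)
            - (∑ k, Γ k i j * A k) * (v i * v j) := by ring
        _ = (1/2) * (Q i j * v i * v j) + (1/2) * (Q j i * v i * v j)
            - ∑ k, A k * (Γ k i j * v i * v j) := by rw [e]
    rw [Finset.sum_congr rfl fun i (_ : i ∈ Finset.univ) =>
      Finset.sum_congr rfl fun j (_ : j ∈ Finset.univ) => h1 i j]
    simp only [Finset.sum_add_distrib, Finset.sum_sub_distrib]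
    have hsym : ∑ i, ∑ j, (1/2) * (Q j i * v i * v j) = (1/2) * SQ := by
      rw [Finset.sum_comm, hSQ, Finset.mul_sum]
      refine Finset.sum_congr rfl fun i _ => ?_
      rw [Finset.mul_sum]
      exact Finset.sum_congr rfl fun j _ => by ring
    have hhalf : ∑ i, ∑ j, (1/2) * (Q i j * v i * v j) = (1/2) * SQ := by
      rw [hSQ, Finset.mul_sum]
      refine Finset.sum_congr rfl fun i _ => ?_
      rw [Finset.mul_sum]
    have hXpart : ∑ i, ∑ j, ∑ k, A k * (Γ k i j * v i * v j) = SX := by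
      rw [bk_sum3_cycle fun i j k => A k * (Γ k i j * v i * v j), hSX]
      refine Finset.sum_congr rfl fun k _ => ?_
      rw [hX]
      simp only []
      rw [Finset.mul_sum]
      refine Finset.sum_congr rfl fun i _ => ?_
      rw [Finset.mul_sum]
      try exact Finset.sum_congr rfl fun j _ => by ring
    rw [hsym, hhalf, hXpart]
    try ring
  have M2 : (∑ j, (∑ i, (∑ k, gi i k * A k) * (Q i j - Q j i)) * v j) = SY := by
    have h1 : ∑ j, (∑ i, (∑ k, gi i k * A k) * (Q i j - Q j i)) * v j
        = ∑ j, ∑ i, ∑ k, gi i k * A k * ((Q i j - Q j i) * v j) := by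
      refine Finset.sum_congr rfl fun j _ => ?_
      rw [Finset.sum_mul]
      refine Finset.sum_congr rfl fun i _ => ?_
      rw [Finset.sum_mul, Finset.sum_mul]
      exact Finset.sum_congr rfl fun k _ => by ring
    rw [h1, bk_sum3_cycle' fun j i k => gi i k * A k * ((Q i j - Q j i) * v j), hSY]
    have h2 : ∑ i, ∑ k, ∑ j, gi i k * A k * ((Q i j - Q j i) * v j)
        = ∑ k, ∑ i, ∑ j, gi i k * A k * ((Q i j - Q j i) * v j) := Finset.sum_comm
    rw [h2]
    refine Finset.sum_congr rfl fun k _ => ?_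
    calc ∑ i, ∑ j, gi i k * A k * ((Q i j - Q j i) * v j)
        = ∑ j, ∑ i, gi i k * A k * ((Q i j - Q j i) * v j) := Finset.sum_comm
      _ = A k * Y k := by
          rw [hY]
          simp only []
          rw [Finset.mul_sum]
          refine Finset.sum_congr rfl fun a _ => ?_
          rw [Finset.mul_sum]
          exact Finset.sum_congr rfl fun b _ => by rw [gisym b k]; ring
  have M3 : (∑ i, (∑ k, gi i k * A k) * (Qu i - (1/2) * P i)) = (1/2) * SZ := by
    have h1 : ∑ i, (∑ k, gi i k * A k) * (Qu i - (1/2) * P i)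
        = ∑ i, ∑ k, gi i k * A k * (Qu i - (1/2) * P i) := by
      refine Finset.sum_congr rfl fun i _ => ?_
      rw [Finset.sum_mul]
    rw [h1, Finset.sum_comm, hSZ, Finset.mul_sum]
    refine Finset.sum_congr rfl fun k _ => ?_
    rw [hZ]
    simp only []
    rw [Finset.mul_sum, Finset.mul_sum]
    exact Finset.sum_congr rfl fun i _ => by rw [gisym i k]; ring
  -- assemble
  have hG2 : (∑ j, ((∑ i, (∑ k, gi i k * A k) * (Q i j - Q j i)) - P j) * c * v j)
      = (SY - SP) * c := by
    rw [Finset.sum_congr rfl fun j (_ : j ∈ Finset.univ) =>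
      show ((∑ i, (∑ k, gi i k * A k) * (Q i j - Q j i)) - P j) * c * v j
        = ((∑ i, (∑ k, gi i k * A k) * (Q i j - Q j i)) * v j - P j * v j) * c by ring]
    rw [← Finset.sum_mul, Finset.sum_sub_distrib, M2, ← hSP]
  rw [E1, EW, E2, EAW, M1, hG2, M3]
  ring



lemma bk_hasDerivAt_aSum {n : ℕ} (a : (Fin n → ℝ) → ℝ → Fin n → ℝ)
    (ha : ∀ i, ContDiff ℝ (⊤ : ℕ∞) (fun p : (Fin n → ℝ) × ℝ => a p.1 p.2 i))
    (x : ℝ → Fin n → ℝ) (u : ℝ → ℝ) (hx : ContDiff ℝ 2 x) (hu : Differentiable ℝ u) (s : ℝ) :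
    HasDerivAt (fun t => ∑ i, a (x t) (u t) i * deriv x t i)
      (∑ i, (((∑ j, pdx n (fun y w => a y w i) j (x s) (u s) * deriv x s j)
          + pdu n (fun y w => a y w i) (x s) (u s) * deriv u s) * deriv x s i
        + a (x s) (u s) i * deriv (deriv x) s i)) s := by
  refine HasDerivAt.fun_sum fun i _ => ?_
  have h1 := hasDerivAt_comp_vec2 (fun y w => a y w i) (ha i) x u
    (hx.differentiable (by norm_num)) hu s
  exact h1.fun_mul (bk_deriv2_comp x hx s i)

/-- **Form of the geodesics.** A curve `γ = (x,u,r)` on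
`(−T,T)` with constant energy `E` and `u̇₀ ≠ 0` is a geodesic of the
Brinkmann metric iff (a) `u` is affine, (b) `x` solves the spatial force
equation, and (c) `r` is given by the integral formula. -/
theorem brinkmann_form_of_geodesics
    (n : ℕ) (h hinv : (Fin n → ℝ) → Matrix (Fin n) (Fin n) ℝ)
    (hmet : IsRiemMetric n h hinv)
    (H : (Fin n → ℝ) → ℝ → ℝ) (a : (Fin n → ℝ) → ℝ → Fin n → ℝ)
    (hH : ContDiff ℝ (⊤ : ℕ∞) (fun p : (Fin n → ℝ) × ℝ => H p.1 p.2))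
    (ha : ∀ i, ContDiff ℝ (⊤ : ℕ∞) (fun p : (Fin n → ℝ) × ℝ => a p.1 p.2 i))
    (T : ℝ) (hT : 0 < T)
    (x : ℝ → Fin n → ℝ) (u r : ℝ → ℝ)
    (hx : ContDiff ℝ 2 x) (hu : ContDiff ℝ 2 u) (hr : ContDiff ℝ 2 r)
    (hu0 : deriv u 0 ≠ 0)
    (E : ℝ)
    -- constant energy `E_γ = g(γ',γ')`
    (hE : ∀ s ∈ Set.Ioo (-T) T,
      hBil n h (x s) (deriv x s) (deriv x s) - 2 * deriv u s * deriv r s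
        + H (x s) (u s) * (deriv u s)^2
        + 2 * deriv u s * ∑ i, a (x s) (u s) i * deriv x s i = E) :
    -- γ is a geodesic of the Brinkmann metric ...
    (∀ s ∈ Set.Ioo (-T) T,
        (∀ i, deriv (deriv x) s i =
          -(∑ j, ∑ k, christoffelSym n h hinv (x s) i j k * deriv x s j * deriv x s k)
          - (∑ j, ∑ k, hinv (x s) i k *
              (pdx n (fun y w => a y w k) j (x s) (u s)
                - pdx n (fun y w => a y w j) k (x s) (u s)) * deriv x s j) * deriv u s
          - (1/2) * (∑ k, hinv (x s) i k *
              (2 * pdu n (fun y w => a y w k) (x s) (u s)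
                - pdx n H k (x s) (u s))) * (deriv u s)^2) ∧
        deriv (deriv u) s = 0 ∧
        deriv (deriv r) s =
          (∑ i, ∑ j, ((1/2) * (pdx n (fun y w => a y w i) j (x s) (u s)
              + pdx n (fun y w => a y w j) i (x s) (u s))
            - ∑ k, christoffelSym n h hinv (x s) k i j * a (x s) (u s) k)
            * deriv x s i * deriv x s j)
          - (∑ j, ((∑ i, (∑ k, hinv (x s) i k * a (x s) (u s) k) *
                (pdx n (fun y w => a y w i) j (x s) (u s)
                  - pdx n (fun y w => a y w j) i (x s) (u s)))
              - pdx n H j (x s) (u s)) * deriv u s * deriv x s j)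
          - ((∑ i, (∑ k, hinv (x s) i k * a (x s) (u s) k) *
                (pdu n (fun y w => a y w i) (x s) (u s)
                  - (1/2) * pdx n H i (x s) (u s)))
              - (1/2) * pdu n H (x s) (u s)) * (deriv u s)^2)
    ↔
    -- ... iff (a) ∧ (b) ∧ (c):
    ((∀ s ∈ Set.Ioo (-T) T, u s = u 0 + s * deriv u 0) ∧
     (∀ s ∈ Set.Ioo (-T) T, ∀ i, covD n h hinv x s i =
        -(∑ j, ∑ k, hinv (x s) i k *
            (pdx n (fun y w => a y w k) j (x s) (u s)
              - pdx n (fun y w => a y w j) k (x s) (u s)) * deriv x s j) * deriv u 0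
        - (1/2) * (∑ k, hinv (x s) i k *
            (2 * pdu n (fun y w => a y w k) (x s) (u s)
              - pdx n H k (x s) (u s))) * (deriv u 0)^2) ∧
     (∀ s ∈ Set.Ioo (-T) T, r s = r 0
        - (1 / (2 * deriv u 0)) * ∫ σ in (0:ℝ)..s,
            (E - hBil n h (x σ) (deriv x σ) (deriv x σ)
              - (deriv u 0)^2 * H (x σ) (u σ)
              - 2 * deriv u 0 * ∑ i, a (x σ) (u σ) i * deriv x σ i))) := by
  obtain ⟨hsm, hinvsm, hsymm, hpos, hunit⟩ := hmet
  have hxd : Differentiable ℝ x := hx.differentiable (by norm_num)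
  have hud : Differentiable ℝ u := hu.differentiable (by norm_num)
  have hrd : Differentiable ℝ r := hr.differentiable (by norm_num)
  have hdud : Differentiable ℝ (deriv u) :=
    ((contDiff_succ_iff_deriv (n := 1)).mp hu).2.2.differentiable (by simp)
  have hdrd : Differentiable ℝ (deriv r) :=
    ((contDiff_succ_iff_deriv (n := 1)).mp hr).2.2.differentiable (by simp)
  have h0mem : (0:ℝ) ∈ Set.Ioo (-T) T := Set.mem_Ioo.mpr ⟨by linarith, hT⟩
  have hc2 : (2:ℝ) * deriv u 0 ≠ 0 := mul_ne_zero two_ne_zero hu0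
  constructor
  · intro hgeo
    have hu'const : ∀ s ∈ Set.Ioo (-T) T, deriv u s = deriv u 0 := fun s hs =>
      bk_const_of_deriv_zero hdud (fun t ht => (hgeo t ht).2.1) hs h0mem
    have haff : ∀ s ∈ Set.Ioo (-T) T, u s = u 0 + s * deriv u 0 := by
      intro s hs
      have key : (fun t => u t - t * deriv u 0) s = (fun t => u t - t * deriv u 0) 0 := by
        refine bk_const_of_deriv_zero (f := fun t => u t - t * deriv u 0) ?_ ?_ hs h0mem
        · exact hud.sub (differentiable_id.mul_const _)
        · intro t ht
          have hlin : HasDerivAt (fun t : ℝ => t * deriv u 0) (deriv u 0) t := by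
            simpa using (hasDerivAt_id t).mul_const (deriv u 0)
          have hd : HasDerivAt (fun t => u t - t * deriv u 0) (deriv u t - deriv u 0) t :=
            ((hud t).hasDerivAt).sub hlin
          rw [hd.deriv, hu'const t ht]
          ring
      simp only [zero_mul, sub_zero] at key
      linarith [key]
    refine ⟨haff, ?_, ?_⟩
    · intro s hs i
      have h1 := (hgeo s hs).1 i
      show deriv (deriv x) s i +
          (∑ j, ∑ k, christoffelSym n h hinv (x s) i j k * deriv x s j * deriv x s k) = _
      rw [h1, hu'const s hs]
      ring
    · intro s hs
      have hsub : Set.uIcc (0:ℝ) s ⊆ Set.Ioo (-T) T :=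
        Set.ordConnected_Ioo.uIcc_subset h0mem hs
      have hftc : ∫ σ in (0:ℝ)..s, deriv r σ = r s - r 0 :=
        intervalIntegral.integral_deriv_eq_sub (fun σ _ => hrd σ)
          ((hdrd.continuous).intervalIntegrable 0 s)
      have hcongr : (∫ σ in (0:ℝ)..s,
            (E - hBil n h (x σ) (deriv x σ) (deriv x σ)
              - (deriv u 0)^2 * H (x σ) (u σ)
              - 2 * deriv u 0 * ∑ i, a (x σ) (u σ) i * deriv x σ i))
          = ∫ σ in (0:ℝ)..s, (-(2 * deriv u 0)) * deriv r σ := by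
        refine intervalIntegral.integral_congr ?_
        intro σ hσ
        have hσ' := hsub hσ
        have hEσ := hE σ hσ'
        rw [hu'const σ hσ'] at hEσ
        simp only []
        linear_combination -hEσ
      rw [hcongr, intervalIntegral.integral_const_mul, hftc]
      field_simp
      ring
  · rintro ⟨haff, hcov, -⟩
    have hu' : ∀ s ∈ Set.Ioo (-T) T, deriv u s = deriv u 0 := by
      intro s hs
      have hev : u =ᶠ[nhds s] (fun t => u 0 + t * deriv u 0) := by
        filter_upwards [isOpen_Ioo.mem_nhds hs] with t ht
        exact haff t ht
      rw [hev.deriv_eq]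
      have hdaff : HasDerivAt (fun t => u 0 + t * deriv u 0) (deriv u 0) s := by
        simpa using (hasDerivAt_const s (u 0)).fun_add ((hasDerivAt_id s).mul_const (deriv u 0))
      exact hdaff.deriv
    have hu'' : ∀ s ∈ Set.Ioo (-T) T, deriv (deriv u) s = 0 := by
      intro s hs
      have hev : deriv u =ᶠ[nhds s] (fun _ => deriv u 0) := by
        filter_upwards [isOpen_Ioo.mem_nhds hs] with t ht
        exact hu' t ht
      rw [hev.deriv_eq, deriv_const]
    have hxeq : ∀ s ∈ Set.Ioo (-T) T, ∀ i, deriv (deriv x) s i =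
        -(∑ j, ∑ k, christoffelSym n h hinv (x s) i j k * deriv x s j * deriv x s k)
        - (∑ j, ∑ k, hinv (x s) i k *
            (pdx n (fun y w => a y w k) j (x s) (u s)
              - pdx n (fun y w => a y w j) k (x s) (u s)) * deriv x s j) * deriv u 0
        - (1/2) * (∑ k, hinv (x s) i k *
            (2 * pdu n (fun y w => a y w k) (x s) (u s)
              - pdx n H k (x s) (u s))) * (deriv u 0)^2 := by
      intro s hs i
      have h1 : deriv (deriv x) s i +
          (∑ j, ∑ k, christoffelSym n h hinv (x s) i j k * deriv x s j * deriv x s k) =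
          -(∑ j, ∑ k, hinv (x s) i k *
              (pdx n (fun y w => a y w k) j (x s) (u s)
                - pdx n (fun y w => a y w j) k (x s) (u s)) * deriv x s j) * deriv u 0
          - (1/2) * (∑ k, hinv (x s) i k *
              (2 * pdu n (fun y w => a y w k) (x s) (u s)
                - pdx n H k (x s) (u s))) * (deriv u 0)^2 := hcov s hs i
      linear_combination h1
    intro s hs
    refine ⟨fun i => ?_, hu'' s hs, ?_⟩
    · rw [hu' s hs]
      exact hxeq s hs i
    · -- the r'' equation
      have hr'ρ : ∀ t ∈ Set.Ioo (-T) T, deriv r t =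
          (hBil n h (x t) (deriv x t) (deriv x t) + H (x t) (u t) * (deriv u 0)^2
            + 2 * deriv u 0 * (∑ i, a (x t) (u t) i * deriv x t i) - E)
            / (2 * deriv u 0) := by
        intro t ht
        have hEt := hE t ht
        rw [hu' t ht] at hEt
        rw [eq_div_iff hc2]
        linear_combination -hEt
      have hr'' : deriv (deriv r) s = deriv (fun t =>
          (hBil n h (x t) (deriv x t) (deriv x t) + H (x t) (u t) * (deriv u 0)^2
            + 2 * deriv u 0 * (∑ i, a (x t) (u t) i * deriv x t i) - E)
            / (2 * deriv u 0)) s := by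
        apply Filter.EventuallyEq.deriv_eq
        filter_upwards [isOpen_Ioo.mem_nhds hs] with t ht
        exact hr'ρ t ht
      have hB := bk_hasDerivAt_hBil h hsm x hx s
      have hH2 := hasDerivAt_comp_vec2 H hH x u hxd hud s
      have hA := bk_hasDerivAt_aSum a ha x u hx hud s
      have hρ' : HasDerivAt (fun t =>
          (hBil n h (x t) (deriv x t) (deriv x t) + H (x t) (u t) * (deriv u 0)^2
            + 2 * deriv u 0 * (∑ i, a (x t) (u t) i * deriv x t i) - E)
            / (2 * deriv u 0))
          (((∑ i, ∑ j,
            ((∑ l, pderiv' n (fun y => h y i j) l (x s) * deriv x s l)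
                * deriv x s i * deriv x s j
              + h (x s) i j * deriv (deriv x) s i * deriv x s j
              + h (x s) i j * deriv x s i * deriv (deriv x) s j))
          + ((∑ j, pdx n H j (x s) (u s) * deriv x s j)
              + pdu n H (x s) (u s) * deriv u s) * (deriv u 0)^2
          + 2 * deriv u 0 * (∑ i,
              (((∑ j, pdx n (fun y w => a y w i) j (x s) (u s) * deriv x s j)
                + pdu n (fun y w => a y w i) (x s) (u s) * deriv u s) * deriv x s i
              + a (x s) (u s) i * deriv (deriv x) s i)))
            / (2 * deriv u 0)) s :=
        (((hB.add (hH2.mul_const ((deriv u 0)^2))).add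
          (hA.const_mul (2 * deriv u 0))).sub_const E).div_const (2 * deriv u 0)
      rw [hr'', hρ'.deriv, hu' s hs]
      exact bk_key_algebra (h (x s)) (hinv (x s)) (fun i j => hsymm (x s) i j)
        (fun i j => bk_hinv_symm hsymm hunit (x s) i j)
        (fun j k => bk_contr hunit (x s) j k)
        (fun l i j => pderiv' n (fun y => h y i j) l (x s))
        (deriv x s) (deriv (deriv x) s) (fun i => a (x s) (u s) i)
        (fun j => pdx n H j (x s) (u s))
        (fun i => pdu n (fun y w => a y w i) (x s) (u s))
        (fun i j => pdx n (fun y w => a y w i) j (x s) (u s))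
        (pdu n H (x s) (u s)) (deriv u 0) hu0
        (fun i j k => christoffelSym n h hinv (x s) i j k)
        (fun i j k => rfl)
        (fun i => hxeq s hs i)
end keymain
end
end

section
/- The Brinkmann spacetime is geodesically complete if and only if all inextendible solutions x: I → N of the equation D_{ẋ}ẋ^i = −h^{ik}(a_{k,j} − a_{j,k}) ẋ^j u̇₀ − (1/2) h^{ik}(2a_{k,u} − H_{,k}) u̇₀² (for all constants u̇₀) are complete, i.e., defined on all of ℝ. -/
open MeasureTheory Filter Set

noncomputable section

/-- The full geodesic system of the Brinkmann metric, at parameter `s`. -/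
def brinkGeo (n : ℕ) (h hinv : (Fin n → ℝ) → Matrix (Fin n) (Fin n) ℝ)
    (H : (Fin n → ℝ) → ℝ → ℝ) (a : (Fin n → ℝ) → ℝ → Fin n → ℝ)
    (x : ℝ → Fin n → ℝ) (u r : ℝ → ℝ) (s : ℝ) : Prop :=
  (∀ i, deriv (deriv x) s i =
      -(∑ j, ∑ k, christoffelSym n h hinv (x s) i j k * deriv x s j * deriv x s k)
      - (∑ j, ∑ k, hinv (x s) i k *
          (pdx n (fun y w => a y w k) j (x s) (u s)
            - pdx n (fun y w => a y w j) k (x s) (u s)) * deriv x s j) * deriv u s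
      - (1/2) * (∑ k, hinv (x s) i k *
          (2 * pdu n (fun y w => a y w k) (x s) (u s)
            - pdx n H k (x s) (u s))) * (deriv u s)^2) ∧
  deriv (deriv u) s = 0 ∧
  deriv (deriv r) s =
    (∑ i, ∑ j, ((1/2) * (pdx n (fun y w => a y w i) j (x s) (u s)
        + pdx n (fun y w => a y w j) i (x s) (u s))
      - ∑ k, christoffelSym n h hinv (x s) k i j * a (x s) (u s) k)
      * deriv x s i * deriv x s j)
    - (∑ j, ((∑ i, (∑ k, hinv (x s) i k * a (x s) (u s) k) *
          (pdx n (fun y w => a y w i) j (x s) (u s)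
            - pdx n (fun y w => a y w j) i (x s) (u s)))
        - pdx n H j (x s) (u s)) * deriv u s * deriv x s j)
    - ((∑ i, (∑ k, hinv (x s) i k * a (x s) (u s) k) *
          (pdu n (fun y w => a y w i) (x s) (u s)
            - (1/2) * pdx n H i (x s) (u s)))
        - (1/2) * pdu n H (x s) (u s)) * (deriv u s)^2

/-- The spatial equation \eqref{req} on the wave surface, with constant `u̇₀`
and `u(s) = u₀ + s u̇₀`. -/
def brinkSpatial (n : ℕ) (h hinv : (Fin n → ℝ) → Matrix (Fin n) (Fin n) ℝ)
    (H : (Fin n → ℝ) → ℝ → ℝ) (a : (Fin n → ℝ) → ℝ → Fin n → ℝ)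
    (u₀ du₀ : ℝ) (x : ℝ → Fin n → ℝ) (s : ℝ) : Prop :=
  ∀ i, covD n h hinv x s i =
    -(∑ j, ∑ k, hinv (x s) i k *
        (pdx n (fun y w => a y w k) j (x s) (u₀ + s * du₀)
          - pdx n (fun y w => a y w j) k (x s) (u₀ + s * du₀)) * deriv x s j) * du₀
    - (1/2) * (∑ k, hinv (x s) i k *
        (2 * pdu n (fun y w => a y w k) (x s) (u₀ + s * du₀)
          - pdx n H k (x s) (u₀ + s * du₀))) * du₀^2

section helpers
variable {n : ℕ} {h hinv : (Fin n → ℝ) → Matrix (Fin n) (Fin n) ℝ}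
  {H : (Fin n → ℝ) → ℝ → ℝ} {a : (Fin n → ℝ) → ℝ → Fin n → ℝ}

lemma pderiv'_contDiff {f : (Fin n → ℝ) → ℝ} (hf : ContDiff ℝ (⊤ : ℕ∞) f) (j : Fin n) :
    ContDiff ℝ (⊤ : ℕ∞) (fun x => pderiv' n f j x) :=
  (hf.fderiv_right (by simp)).clm_apply contDiff_const

lemma pdx_eq (hH : ContDiff ℝ (⊤ : ℕ∞) (fun p : (Fin n → ℝ) × ℝ => H p.1 p.2))
    (k : Fin n) (x : Fin n → ℝ) (u : ℝ) :
    pdx n H k x u = fderiv ℝ (fun p : (Fin n → ℝ) × ℝ => H p.1 p.2) (x, u) (Pi.single k 1, 0) := by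
  have h1 : HasFDerivAt (fun y : Fin n → ℝ => (y, u))
      ((ContinuousLinearMap.id ℝ (Fin n → ℝ)).prod 0) x :=
    (hasFDerivAt_id x).prodMk (hasFDerivAt_const u x)
  have h2 := (hH.differentiable (by simp) (x, u)).hasFDerivAt
  have h4 : HasFDerivAt (fun y => H y u)
      ((fderiv ℝ (fun p : (Fin n → ℝ) × ℝ => H p.1 p.2) (x, u)).comp
        ((ContinuousLinearMap.id ℝ (Fin n → ℝ)).prod 0)) x :=
    HasFDerivAt.comp (g := fun p : (Fin n → ℝ) × ℝ => H p.1 p.2) x h2 h1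
  rw [pdx, pderiv', h4.fderiv]
  rfl

lemma pdu_eq (hH : ContDiff ℝ (⊤ : ℕ∞) (fun p : (Fin n → ℝ) × ℝ => H p.1 p.2))
    (x : Fin n → ℝ) (u : ℝ) :
    pdu n H x u = fderiv ℝ (fun p : (Fin n → ℝ) × ℝ => H p.1 p.2) (x, u) (0, 1) := by
  have h1 : HasFDerivAt (fun w : ℝ => ((x : Fin n → ℝ), w))
      ((0 : ℝ →L[ℝ] (Fin n → ℝ)).prod (ContinuousLinearMap.id ℝ ℝ)) u :=
    (hasFDerivAt_const x u).prodMk (hasFDerivAt_id u)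
  have h2 := (hH.differentiable (by simp) (x, u)).hasFDerivAt
  have h4 : HasDerivAt (fun w => H x w)
      (((fderiv ℝ (fun p : (Fin n → ℝ) × ℝ => H p.1 p.2) (x, u)).comp
        ((0 : ℝ →L[ℝ] (Fin n → ℝ)).prod (ContinuousLinearMap.id ℝ ℝ))) 1) u :=
    (h2.comp u h1).hasDerivAt
  rw [pdu, h4.deriv]
  rfl

lemma pdx_contDiff (hH : ContDiff ℝ (⊤ : ℕ∞) (fun p : (Fin n → ℝ) × ℝ => H p.1 p.2)) (k : Fin n) :
    ContDiff ℝ (⊤ : ℕ∞) (fun p : (Fin n → ℝ) × ℝ => pdx n H k p.1 p.2) := by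
  have : (fun p : (Fin n → ℝ) × ℝ => pdx n H k p.1 p.2)
      = fun p : (Fin n → ℝ) × ℝ =>
        fderiv ℝ (fun q : (Fin n → ℝ) × ℝ => H q.1 q.2) p (Pi.single k 1, 0) :=
    funext fun p => pdx_eq hH k p.1 p.2
  rw [this]
  exact (hH.fderiv_right (by simp)).clm_apply contDiff_const

lemma pdu_contDiff (hH : ContDiff ℝ (⊤ : ℕ∞) (fun p : (Fin n → ℝ) × ℝ => H p.1 p.2)) :
    ContDiff ℝ (⊤ : ℕ∞) (fun p : (Fin n → ℝ) × ℝ => pdu n H p.1 p.2) := by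
  have : (fun p : (Fin n → ℝ) × ℝ => pdu n H p.1 p.2)
      = fun p : (Fin n → ℝ) × ℝ =>
        fderiv ℝ (fun q : (Fin n → ℝ) × ℝ => H q.1 q.2) p ((0 : Fin n → ℝ), (1:ℝ)) :=
    funext fun p => pdu_eq hH p.1 p.2
  rw [this]
  exact (hH.fderiv_right (by simp)).clm_apply contDiff_const

lemma christoffel_contDiff (hh : ∀ i j, ContDiff ℝ (⊤ : ℕ∞) (fun x => h x i j))
    (hhinv : ∀ i j, ContDiff ℝ (⊤ : ℕ∞) (fun x => hinv x i j)) (i j k : Fin n) :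
    ContDiff ℝ (⊤ : ℕ∞) (fun x => christoffelSym n h hinv x i j k) := by
  unfold christoffelSym
  exact contDiff_const.mul (ContDiff.sum fun l _ => (hhinv i l).mul
    (((pderiv'_contDiff (hh l k) j).add (pderiv'_contDiff (hh l j) k)).sub
      (pderiv'_contDiff (hh j k) l)))

end helpers
def xF (n : ℕ) (h hinv : (Fin n → ℝ) → Matrix (Fin n) (Fin n) ℝ)
    (H : (Fin n → ℝ) → ℝ → ℝ) (a : (Fin n → ℝ) → ℝ → Fin n → ℝ)
    (p : (Fin n → ℝ) × (Fin n → ℝ) × ℝ × ℝ) : Fin n → ℝ := fun i =>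
  -(∑ j, ∑ k, christoffelSym n h hinv p.1 i j k * p.2.1 j * p.2.1 k)
  - (∑ j, ∑ k, hinv p.1 i k *
      (pdx n (fun y w => a y w k) j p.1 p.2.2.1
        - pdx n (fun y w => a y w j) k p.1 p.2.2.1) * p.2.1 j) * p.2.2.2
  - (1/2) * (∑ k, hinv p.1 i k *
      (2 * pdu n (fun y w => a y w k) p.1 p.2.2.1
        - pdx n H k p.1 p.2.2.1)) * p.2.2.2^2

def rF (n : ℕ) (h hinv : (Fin n → ℝ) → Matrix (Fin n) (Fin n) ℝ)
    (H : (Fin n → ℝ) → ℝ → ℝ) (a : (Fin n → ℝ) → ℝ → Fin n → ℝ)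
    (p : (Fin n → ℝ) × (Fin n → ℝ) × ℝ × ℝ) : ℝ :=
  (∑ i, ∑ j, ((1/2) * (pdx n (fun y w => a y w i) j p.1 p.2.2.1
      + pdx n (fun y w => a y w j) i p.1 p.2.2.1)
    - ∑ k, christoffelSym n h hinv p.1 k i j * a p.1 p.2.2.1 k)
    * p.2.1 i * p.2.1 j)
  - (∑ j, ((∑ i, (∑ k, hinv p.1 i k * a p.1 p.2.2.1 k) *
        (pdx n (fun y w => a y w i) j p.1 p.2.2.1
          - pdx n (fun y w => a y w j) i p.1 p.2.2.1))
      - pdx n H j p.1 p.2.2.1) * p.2.2.2 * p.2.1 j)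
  - ((∑ i, (∑ k, hinv p.1 i k * a p.1 p.2.2.1 k) *
        (pdu n (fun y w => a y w i) p.1 p.2.2.1
          - (1/2) * pdx n H i p.1 p.2.2.1))
      - (1/2) * pdu n H p.1 p.2.2.1) * p.2.2.2^2

section smooth
variable {n : ℕ} {h hinv : (Fin n → ℝ) → Matrix (Fin n) (Fin n) ℝ}
  {H : (Fin n → ℝ) → ℝ → ℝ} {a : (Fin n → ℝ) → ℝ → Fin n → ℝ}
  (hh : ∀ i j, ContDiff ℝ (⊤ : ℕ∞) (fun x => h x i j))
  (hhinv : ∀ i j, ContDiff ℝ (⊤ : ℕ∞) (fun x => hinv x i j))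
  (hH : ContDiff ℝ (⊤ : ℕ∞) (fun p : (Fin n → ℝ) × ℝ => H p.1 p.2))
  (ha : ∀ i, ContDiff ℝ (⊤ : ℕ∞) (fun p : (Fin n → ℝ) × ℝ => a p.1 p.2 i))

private lemma q_contDiff :
    ContDiff ℝ (⊤ : ℕ∞) (fun p : (Fin n → ℝ) × (Fin n → ℝ) × ℝ × ℝ => (p.1, p.2.2.1)) :=
  contDiff_fst.prodMk (contDiff_fst.comp (contDiff_snd.comp contDiff_snd))

include hh hhinv hH ha in
lemma xF_contDiff : ContDiff ℝ (⊤ : ℕ∞) (xF n h hinv H a) := by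
  rw [contDiff_pi]
  intro i
  unfold xF
  have hq := q_contDiff (n := n)
  have hv : ∀ j : Fin n, ContDiff ℝ (⊤ : ℕ∞)
      (fun p : (Fin n → ℝ) × (Fin n → ℝ) × ℝ × ℝ => p.2.1 j) := fun j =>
    (ContinuousLinearMap.proj (R := ℝ) (φ := fun _ : Fin n => ℝ)
      j).contDiff.comp (contDiff_fst.comp contDiff_snd)
  have hdu : ContDiff ℝ (⊤ : ℕ∞)
      (fun p : (Fin n → ℝ) × (Fin n → ℝ) × ℝ × ℝ => p.2.2.2) :=
    contDiff_snd.comp (contDiff_snd.comp contDiff_snd)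
  have hGamma : ∀ i j k : Fin n, ContDiff ℝ (⊤ : ℕ∞)
      (fun p : (Fin n → ℝ) × (Fin n → ℝ) × ℝ × ℝ => christoffelSym n h hinv p.1 i j k) :=
    fun i j k => (christoffel_contDiff hh hhinv i j k).comp contDiff_fst
  have hinv' : ∀ i k : Fin n, ContDiff ℝ (⊤ : ℕ∞)
      (fun p : (Fin n → ℝ) × (Fin n → ℝ) × ℝ × ℝ => hinv p.1 i k) :=
    fun i k => (hhinv i k).comp contDiff_fst
  have hpdxa : ∀ j k : Fin n, ContDiff ℝ (⊤ : ℕ∞)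
      (fun p : (Fin n → ℝ) × (Fin n → ℝ) × ℝ × ℝ =>
        pdx n (fun y w => a y w k) j p.1 p.2.2.1) :=
    fun j k => (pdx_contDiff (H := fun y w => a y w k) (ha k) j).comp hq
  have hpdua : ∀ k : Fin n, ContDiff ℝ (⊤ : ℕ∞)
      (fun p : (Fin n → ℝ) × (Fin n → ℝ) × ℝ × ℝ =>
        pdu n (fun y w => a y w k) p.1 p.2.2.1) :=
    fun k => (pdu_contDiff (H := fun y w => a y w k) (ha k)).comp hq
  have hpdxH : ∀ k : Fin n, ContDiff ℝ (⊤ : ℕ∞)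
      (fun p : (Fin n → ℝ) × (Fin n → ℝ) × ℝ × ℝ => pdx n H k p.1 p.2.2.1) :=
    fun k => (pdx_contDiff hH k).comp hq
  exact (((ContDiff.sum fun j _ => ContDiff.sum fun k _ =>
      ((hGamma i j k).mul (hv j)).mul (hv k)).neg.sub
    ((ContDiff.sum fun j _ => ContDiff.sum fun k _ =>
      ((hinv' i k).mul ((hpdxa j k).sub (hpdxa k j))).mul (hv j)).mul hdu)).sub
    ((contDiff_const.mul (ContDiff.sum fun k _ =>
      (hinv' i k).mul ((contDiff_const.mul (hpdua k)).sub (hpdxH k)))).mul (hdu.pow 2)))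
end smooth
section smooth2
variable {n : ℕ} {h hinv : (Fin n → ℝ) → Matrix (Fin n) (Fin n) ℝ}
  {H : (Fin n → ℝ) → ℝ → ℝ} {a : (Fin n → ℝ) → ℝ → Fin n → ℝ}
  (hh : ∀ i j, ContDiff ℝ (⊤ : ℕ∞) (fun x => h x i j))
  (hhinv : ∀ i j, ContDiff ℝ (⊤ : ℕ∞) (fun x => hinv x i j))
  (hH : ContDiff ℝ (⊤ : ℕ∞) (fun p : (Fin n → ℝ) × ℝ => H p.1 p.2))
  (ha : ∀ i, ContDiff ℝ (⊤ : ℕ∞) (fun p : (Fin n → ℝ) × ℝ => a p.1 p.2 i))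

include hh hhinv hH ha in
lemma rF_contDiff : ContDiff ℝ (⊤ : ℕ∞) (rF n h hinv H a) := by
  unfold rF
  have hq := q_contDiff (n := n)
  have hv : ∀ j : Fin n, ContDiff ℝ (⊤ : ℕ∞)
      (fun p : (Fin n → ℝ) × (Fin n → ℝ) × ℝ × ℝ => p.2.1 j) := fun j =>
    (ContinuousLinearMap.proj (R := ℝ) (φ := fun _ : Fin n => ℝ)
      j).contDiff.comp (contDiff_fst.comp contDiff_snd)
  have hdu : ContDiff ℝ (⊤ : ℕ∞)
      (fun p : (Fin n → ℝ) × (Fin n → ℝ) × ℝ × ℝ => p.2.2.2) :=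
    contDiff_snd.comp (contDiff_snd.comp contDiff_snd)
  have hGamma : ∀ i j k : Fin n, ContDiff ℝ (⊤ : ℕ∞)
      (fun p : (Fin n → ℝ) × (Fin n → ℝ) × ℝ × ℝ => christoffelSym n h hinv p.1 i j k) :=
    fun i j k => (christoffel_contDiff hh hhinv i j k).comp contDiff_fst
  have hinv' : ∀ i k : Fin n, ContDiff ℝ (⊤ : ℕ∞)
      (fun p : (Fin n → ℝ) × (Fin n → ℝ) × ℝ × ℝ => hinv p.1 i k) :=
    fun i k => (hhinv i k).comp contDiff_fst
  have hpdxa : ∀ j k : Fin n, ContDiff ℝ (⊤ : ℕ∞)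
      (fun p : (Fin n → ℝ) × (Fin n → ℝ) × ℝ × ℝ =>
        pdx n (fun y w => a y w k) j p.1 p.2.2.1) :=
    fun j k => (pdx_contDiff (H := fun y w => a y w k) (ha k) j).comp hq
  have hpdua : ∀ k : Fin n, ContDiff ℝ (⊤ : ℕ∞)
      (fun p : (Fin n → ℝ) × (Fin n → ℝ) × ℝ × ℝ =>
        pdu n (fun y w => a y w k) p.1 p.2.2.1) :=
    fun k => (pdu_contDiff (H := fun y w => a y w k) (ha k)).comp hq
  have hpdxH : ∀ k : Fin n, ContDiff ℝ (⊤ : ℕ∞)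
      (fun p : (Fin n → ℝ) × (Fin n → ℝ) × ℝ × ℝ => pdx n H k p.1 p.2.2.1) :=
    fun k => (pdx_contDiff hH k).comp hq
  have hpduH : ContDiff ℝ (⊤ : ℕ∞)
      (fun p : (Fin n → ℝ) × (Fin n → ℝ) × ℝ × ℝ => pdu n H p.1 p.2.2.1) :=
    (pdu_contDiff hH).comp hq
  have haval : ∀ k : Fin n, ContDiff ℝ (⊤ : ℕ∞)
      (fun p : (Fin n → ℝ) × (Fin n → ℝ) × ℝ × ℝ => a p.1 p.2.2.1 k) :=
    fun k => (ha k).comp hq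
  exact ((ContDiff.sum fun i _ => ContDiff.sum fun j _ =>
      (((contDiff_const.mul ((hpdxa j i).add (hpdxa i j))).sub
        (ContDiff.sum fun k _ => (hGamma k i j).mul (haval k))).mul (hv i)).mul (hv j)).sub
    (ContDiff.sum fun j _ =>
      ((((ContDiff.sum fun i _ => (ContDiff.sum fun k _ => (hinv' i k).mul (haval k)).mul
        ((hpdxa j i).sub (hpdxa i j)))).sub (hpdxH j)).mul hdu).mul (hv j))).sub
    ((((ContDiff.sum fun i _ => (ContDiff.sum fun k _ => (hinv' i k).mul (haval k)).mul
        ((hpdua i).sub (contDiff_const.mul (hpdxH i))))).sub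
      (contDiff_const.mul hpduH)).mul (hdu.pow 2))
end smooth2

section bridge
variable {n : ℕ} {h hinv : (Fin n → ℝ) → Matrix (Fin n) (Fin n) ℝ}
  {H : (Fin n → ℝ) → ℝ → ℝ} {a : (Fin n → ℝ) → ℝ → Fin n → ℝ}

lemma xF_apply (X V : Fin n → ℝ) (U dU : ℝ) (i : Fin n) :
    xF n h hinv H a (X, V, U, dU) i =
      -(∑ j, ∑ k, christoffelSym n h hinv X i j k * V j * V k)
      - (∑ j, ∑ k, hinv X i k *
          (pdx n (fun y w => a y w k) j X U - pdx n (fun y w => a y w j) k X U) * V j) * dU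
      - (1/2) * (∑ k, hinv X i k *
          (2 * pdu n (fun y w => a y w k) X U - pdx n H k X U)) * dU^2 := rfl

lemma rF_apply (X V : Fin n → ℝ) (U dU : ℝ) :
    rF n h hinv H a (X, V, U, dU) =
      (∑ i, ∑ j, ((1/2) * (pdx n (fun y w => a y w i) j X U
          + pdx n (fun y w => a y w j) i X U)
        - ∑ k, christoffelSym n h hinv X k i j * a X U k) * V i * V j)
      - (∑ j, ((∑ i, (∑ k, hinv X i k * a X U k) *
            (pdx n (fun y w => a y w i) j X U - pdx n (fun y w => a y w j) i X U))
          - pdx n H j X U) * dU * V j)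
      - ((∑ i, (∑ k, hinv X i k * a X U k) *
            (pdu n (fun y w => a y w i) X U - (1/2) * pdx n H i X U))
          - (1/2) * pdu n H X U) * dU^2 := rfl

lemma brinkGeo_iff (x : ℝ → Fin n → ℝ) (u r : ℝ → ℝ) (s : ℝ) :
    brinkGeo n h hinv H a x u r s ↔
      (deriv (deriv x) s = xF n h hinv H a (x s, deriv x s, u s, deriv u s) ∧
       deriv (deriv u) s = 0 ∧
       deriv (deriv r) s = rF n h hinv H a (x s, deriv x s, u s, deriv u s)) := by
  unfold brinkGeo
  constructor
  · rintro ⟨h1, h2, h3⟩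
    refine ⟨funext fun i => ?_, h2, ?_⟩
    · rw [xF_apply]; exact h1 i
    · rw [rF_apply]; exact h3
  · rintro ⟨h1, h2, h3⟩
    refine ⟨fun i => ?_, h2, ?_⟩
    · rw [(congrFun h1 i : _), xF_apply]
    · rw [h3, rF_apply]

lemma brinkSpatial_iff (u₀ du₀ : ℝ) (x : ℝ → Fin n → ℝ) (s : ℝ) :
    brinkSpatial n h hinv H a u₀ du₀ x s ↔
      deriv (deriv x) s = xF n h hinv H a (x s, deriv x s, u₀ + s * du₀, du₀) := by
  unfold brinkSpatial covD
  constructor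
  · intro h1
    funext i
    rw [xF_apply]
    have := h1 i
    linarith
  · intro h1 i
    have := congrFun h1 i
    rw [xF_apply] at this
    linarith

end bridge

section comp
variable {A B : Type*} [NormedAddCommGroup A] [NormedSpace ℝ A]
  [NormedAddCommGroup B] [NormedSpace ℝ B] {f : ℝ → A × B} {y' : A × B} {t : ℝ}

lemma hasDerivAt_fst (hf : HasDerivAt f y' t) : HasDerivAt (fun s => (f s).1) y'.1 t :=
  (ContinuousLinearMap.fst ℝ A B).hasFDerivAt.comp_hasDerivAt t hf

lemma hasDerivAt_snd (hf : HasDerivAt f y' t) : HasDerivAt (fun s => (f s).2) y'.2 t :=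
  (ContinuousLinearMap.snd ℝ A B).hasFDerivAt.comp_hasDerivAt t hf
end comp
section anal
variable {F : Type*} [NormedAddCommGroup F] [NormedSpace ℝ F]

lemma const_of_hasDerivAt_zero {g : ℝ → F} {s : Set ℝ} (ho : IsOpen s) (hc : Convex ℝ s)
    (hg : ∀ t ∈ s, HasDerivAt g 0 t) {x y : ℝ} (hx : x ∈ s) (hy : y ∈ s) : g x = g y := by
  apply hc.is_const_of_fderivWithin_eq_zero
    (fun t ht => (hg t ht).differentiableAt.differentiableWithinAt) ?_ hx hy
  intro t ht
  rw [fderivWithin_of_isOpen ho ht]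
  have h0 : HasFDerivAt g (0 : ℝ →L[ℝ] F) t := by
    have := (hg t ht).hasFDerivAt
    rwa [ContinuousLinearMap.toSpanSingleton_zero] at this
  exact h0.fderiv

lemma exists_antideriv {s : Set ℝ} (ho : IsOpen s) (hs : s.OrdConnected) {s₀ : ℝ}
    (h₀ : s₀ ∈ s) {f : ℝ → ℝ} (hf : ContinuousOn f s) :
    ∃ g : ℝ → ℝ, g s₀ = 0 ∧ ∀ t ∈ s, HasDerivAt g (f t) t := by
  refine ⟨fun t => ∫ τ in s₀..t, f τ, by simp, fun t ht => ?_⟩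
  exact intervalIntegral.integral_hasDerivAt_right
    ((hf.mono (hs.uIcc_subset h₀ ht)).intervalIntegrable)
    (hf.stronglyMeasurableAtFilter ho t ht)
    (hf.continuousAt (ho.mem_nhds ht))

lemma contDiffOn_two_of_derivs {s : Set ℝ} (ho : IsOpen s) {x x' x'' : ℝ → F}
    (h1 : ∀ t ∈ s, HasDerivAt x (x' t) t) (h2 : ∀ t ∈ s, HasDerivAt x' (x'' t) t)
    (h3 : ContinuousOn x'' s) : ContDiffOn ℝ 2 x s := by
  have e1 : EqOn (deriv x) x' s := fun t ht => (h1 t ht).deriv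
  have e2 : EqOn (deriv x') x'' s := fun t ht => (h2 t ht).deriv
  rw [show (2 : WithTop ℕ∞) = 1 + 1 from rfl, contDiffOn_succ_iff_deriv_of_isOpen ho]
  refine ⟨fun t ht => (h1 t ht).differentiableAt.differentiableWithinAt, by simp, ?_⟩
  have : ContDiffOn ℝ 1 x' s := by
    rw [show (1 : WithTop ℕ∞) = 0 + 1 from rfl, contDiffOn_succ_iff_deriv_of_isOpen ho]
    refine ⟨fun t ht => (h2 t ht).differentiableAt.differentiableWithinAt, by simp, ?_⟩
    rw [contDiffOn_zero]
    exact h3.congr e2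
  exact this.congr e1

lemma derivs_of_contDiffOn_two {s : Set ℝ} (ho : IsOpen s) {x : ℝ → F}
    (hx : ContDiffOn ℝ 2 x s) :
    (∀ t ∈ s, HasDerivAt x (deriv x t) t) ∧
    (∀ t ∈ s, HasDerivAt (deriv x) (deriv (deriv x) t) t) ∧
    ContinuousOn (deriv (deriv x)) s := by
  rw [show (2 : WithTop ℕ∞) = 1 + 1 from rfl, contDiffOn_succ_iff_deriv_of_isOpen ho] at hx
  obtain ⟨hdiff, -, hx1⟩ := hx
  rw [show (1 : WithTop ℕ∞) = 0 + 1 from rfl, contDiffOn_succ_iff_deriv_of_isOpen ho] at hx1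
  obtain ⟨hdiff1, -, hx0⟩ := hx1
  exact ⟨fun t ht => (hdiff.differentiableAt (ho.mem_nhds ht)).hasDerivAt,
    fun t ht => (hdiff1.differentiableAt (ho.mem_nhds ht)).hasDerivAt,
    contDiffOn_zero.mp hx0⟩

lemma derivEqOnOpen {s : Set ℝ} (ho : IsOpen s) {f g : ℝ → F} (hfg : EqOn f g s)
    {t : ℝ} (ht : t ∈ s) : deriv f t = deriv g t :=
  Filter.EventuallyEq.deriv_eq (Filter.eventuallyEq_of_mem (ho.mem_nhds ht) hfg)

lemma exists_r_of_rhs {s : Set ℝ} (ho : IsOpen s) (hoc : s.OrdConnected) {s₀ : ℝ}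
    (h₀ : s₀ ∈ s) (c₀ c₁ : ℝ) {f : ℝ → ℝ} (hf : ContinuousOn f s) :
    ∃ r ρ : ℝ → ℝ, r s₀ = c₀ ∧ ρ s₀ = c₁ ∧
      (∀ t ∈ s, HasDerivAt r (ρ t) t) ∧ (∀ t ∈ s, HasDerivAt ρ (f t) t) ∧
      ContDiffOn ℝ 2 r s ∧ (∀ t ∈ s, deriv r t = ρ t) ∧
      (∀ t ∈ s, deriv (deriv r) t = f t) := by
  obtain ⟨g1, hg10, hg1⟩ := exists_antideriv ho hoc h₀ hf
  set ρ : ℝ → ℝ := fun t => c₁ + g1 t with hρ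
  have hρd : ∀ t ∈ s, HasDerivAt ρ (f t) t := fun t ht => (hg1 t ht).const_add c₁
  have hρc : ContinuousOn ρ s := fun t ht => (hρd t ht).continuousAt.continuousWithinAt
  obtain ⟨g2, hg20, hg2⟩ := exists_antideriv ho hoc h₀ hρc
  set r : ℝ → ℝ := fun t => c₀ + g2 t with hr
  have hrd : ∀ t ∈ s, HasDerivAt r (ρ t) t := fun t ht => (hg2 t ht).const_add c₀
  have hdr : ∀ t ∈ s, deriv r t = ρ t := fun t ht => (hrd t ht).deriv
  refine ⟨r, ρ, by simp [hr, hg20], by simp [hρ, hg10], hrd, hρd,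
    contDiffOn_two_of_derivs ho hrd hρd hf, hdr, fun t ht => ?_⟩
  have : deriv (deriv r) t = deriv ρ t := Filter.EventuallyEq.deriv_eq
    (Filter.eventuallyEq_of_mem (ho.mem_nhds ht) hdr)
  rw [this, (hρd t ht).deriv]

lemma lin_hasDeriv (u₀ du₀ : ℝ) (t : ℝ) :
    HasDerivAt (fun s : ℝ => u₀ + s * du₀) du₀ t := by
  simpa using ((hasDerivAt_id t).mul_const du₀).const_add u₀

lemma lin_deriv (u₀ du₀ : ℝ) : deriv (fun s : ℝ => u₀ + s * du₀) = fun _ => du₀ :=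
  funext fun t => (lin_hasDeriv u₀ du₀ t).deriv

lemma lin_deriv2 (u₀ du₀ : ℝ) :
    deriv (deriv (fun s : ℝ => u₀ + s * du₀)) = fun _ => 0 := by
  rw [lin_deriv]; exact deriv_const' du₀

lemma lin_contDiff (u₀ du₀ : ℝ) : ContDiff ℝ 2 (fun s : ℝ => u₀ + s * du₀) :=
  contDiff_const.add (contDiff_id.mul contDiff_const)

end anal
section picard
variable {n : ℕ} {h hinv : (Fin n → ℝ) → Matrix (Fin n) (Fin n) ℝ}
  {H : (Fin n → ℝ) → ℝ → ℝ} {a : (Fin n → ℝ) → ℝ → Fin n → ℝ}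
  (hh : ∀ i j, ContDiff ℝ (⊤ : ℕ∞) (fun x => h x i j))
  (hhinv : ∀ i j, ContDiff ℝ (⊤ : ℕ∞) (fun x => hinv x i j))
  (hH : ContDiff ℝ (⊤ : ℕ∞) (fun p : (Fin n → ℝ) × ℝ => H p.1 p.2))
  (ha : ∀ i, ContDiff ℝ (⊤ : ℕ∞) (fun p : (Fin n → ℝ) × ℝ => a p.1 p.2 i))

include hh hhinv hH ha in
lemma spatial_local_exists (u₀ du₀ s₀ : ℝ) :
    ∃ ε > (0:ℝ), ∃ x : ℝ → (Fin n → ℝ),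
      ContDiffOn ℝ 2 x (Ioo (s₀ - ε) (s₀ + ε)) ∧
      ∀ s ∈ Ioo (s₀ - ε) (s₀ + ε), brinkSpatial n h hinv H a u₀ du₀ x s := by
  classical
  set v : ℝ × (Fin n → ℝ) × (Fin n → ℝ) → ℝ × (Fin n → ℝ) × (Fin n → ℝ) :=
    fun z => (1, z.2.2, xF n h hinv H a (z.2.1, z.2.2, u₀ + z.1 * du₀, du₀)) with hv_def
  have hψ : ContDiff ℝ (⊤ : ℕ∞) (fun z : ℝ × (Fin n → ℝ) × (Fin n → ℝ) =>
      (z.2.1, z.2.2, u₀ + z.1 * du₀, du₀)) :=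
    (contDiff_fst.comp contDiff_snd).prodMk ((contDiff_snd.comp contDiff_snd).prodMk
      ((contDiff_const.add (contDiff_fst.mul contDiff_const)).prodMk contDiff_const))
  have hv : ContDiff ℝ 1 v :=
    (contDiff_const.prodMk ((contDiff_snd.comp contDiff_snd).prodMk
      ((xF_contDiff hh hhinv hH ha).comp hψ))).of_le (by simp)
  obtain ⟨f, hf0, ε, hε, hf⟩ :=
    (hv.contDiffAt (x := (s₀, (0 : Fin n → ℝ), (0 : Fin n → ℝ)))).exists_forall_mem_closedBall_exists_eq_forall_mem_Ioo_hasDerivAt₀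
      s₀
  have hs₀ : s₀ ∈ Ioo (s₀ - ε) (s₀ + ε) := ⟨by linarith, by linarith⟩
  -- the time component is the identity
  have hTeq : ∀ t ∈ Ioo (s₀ - ε) (s₀ + ε), (f t).1 = t := by
    intro t ht
    have hg : ∀ τ ∈ Ioo (s₀ - ε) (s₀ + ε),
        HasDerivAt (fun τ => (f τ).1 - τ) 0 τ := by
      intro τ hτ
      simpa [hv_def] using (hasDerivAt_fst (hf τ hτ)).fun_sub (hasDerivAt_id τ)
    have := const_of_hasDerivAt_zero isOpen_Ioo (convex_Ioo _ _) hg ht hs₀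
    rw [hf0] at this
    simp only [sub_self] at this
    linarith [this]
  set x : ℝ → Fin n → ℝ := fun t => (f t).2.1 with hx_def
  set w : ℝ → Fin n → ℝ := fun t => (f t).2.2 with hw_def
  have hx' : ∀ t ∈ Ioo (s₀ - ε) (s₀ + ε), HasDerivAt x (w t) t :=
    fun t ht => hasDerivAt_fst (hasDerivAt_snd (hf t ht))
  have hw' : ∀ t ∈ Ioo (s₀ - ε) (s₀ + ε),
      HasDerivAt w (xF n h hinv H a (x t, w t, u₀ + t * du₀, du₀)) t := by
    intro t ht
    have := hasDerivAt_snd (hasDerivAt_snd (hf t ht))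
    rw [show (v (f t)).2.2 = xF n h hinv H a (x t, w t, u₀ + (f t).1 * du₀, du₀) from rfl,
      hTeq t ht] at this
    exact this
  have hxc : ContinuousOn x (Ioo (s₀ - ε) (s₀ + ε)) :=
    fun t ht => (hx' t ht).continuousAt.continuousWithinAt
  have hwc : ContinuousOn w (Ioo (s₀ - ε) (s₀ + ε)) :=
    fun t ht => (hw' t ht).continuousAt.continuousWithinAt
  have hGc : ContinuousOn (fun t => xF n h hinv H a (x t, w t, u₀ + t * du₀, du₀))
      (Ioo (s₀ - ε) (s₀ + ε)) :=
    (xF_contDiff hh hhinv hH ha).continuous.comp_continuousOn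
      (hxc.prodMk (hwc.prodMk (((continuous_const.add
        (continuous_id.mul continuous_const)).continuousOn).prodMk continuousOn_const)))
  refine ⟨ε, hε, x, contDiffOn_two_of_derivs isOpen_Ioo hx' hw' hGc, fun s hs => ?_⟩
  rw [brinkSpatial_iff]
  have hdx : deriv x s = w s := (hx' s hs).deriv
  have hEq : EqOn (deriv x) w (Ioo (s₀ - ε) (s₀ + ε)) := fun t ht => (hx' t ht).deriv
  have : deriv (deriv x) s = deriv w s := derivEqOnOpen isOpen_Ioo hEq hs
  rw [this, (hw' s hs).deriv, hdx]
end picard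
section main
variable {n : ℕ} {h hinv : (Fin n → ℝ) → Matrix (Fin n) (Fin n) ℝ}
  {H : (Fin n → ℝ) → ℝ → ℝ} {a : (Fin n → ℝ) → ℝ → Fin n → ℝ}
  (hh : ∀ i j, ContDiff ℝ (⊤ : ℕ∞) (fun x => h x i j))
  (hhinv : ∀ i j, ContDiff ℝ (⊤ : ℕ∞) (fun x => hinv x i j))
  (hH : ContDiff ℝ (⊤ : ℕ∞) (fun p : (Fin n → ℝ) × ℝ => H p.1 p.2))
  (ha : ∀ i, ContDiff ℝ (⊤ : ℕ∞) (fun p : (Fin n → ℝ) × ℝ => a p.1 p.2 i))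

include hh hhinv hH ha in
lemma forward_main
    (L : ∀ T₁ T₂ : ℝ, ∀ (x : ℝ → Fin n → ℝ) (u r : ℝ → ℝ),
        ContDiffOn ℝ 2 x (Set.Ioo T₁ T₂) → ContDiffOn ℝ 2 u (Set.Ioo T₁ T₂) →
        ContDiffOn ℝ 2 r (Set.Ioo T₁ T₂) →
        (∀ s ∈ Set.Ioo T₁ T₂, brinkGeo n h hinv H a x u r s) →
        ∃ (X : ℝ → Fin n → ℝ) (U R : ℝ → ℝ),
          ContDiff ℝ 2 X ∧ ContDiff ℝ 2 U ∧ ContDiff ℝ 2 R ∧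
          (∀ s : ℝ, brinkGeo n h hinv H a X U R s) ∧
          Set.EqOn x X (Set.Ioo T₁ T₂) ∧ Set.EqOn u U (Set.Ioo T₁ T₂) ∧
          Set.EqOn r R (Set.Ioo T₁ T₂))
    (u₀ du₀ T₁ T₂ : ℝ) (x : ℝ → Fin n → ℝ) (hne : (Ioo T₁ T₂).Nonempty)
    (hx : ContDiffOn ℝ 2 x (Set.Ioo T₁ T₂))
    (hsp : ∀ s ∈ Set.Ioo T₁ T₂, brinkSpatial n h hinv H a u₀ du₀ x s) :
    ∃ X : ℝ → Fin n → ℝ, ContDiff ℝ 2 X ∧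
      (∀ s : ℝ, brinkSpatial n h hinv H a u₀ du₀ X s) ∧
      Set.EqOn x X (Set.Ioo T₁ T₂) := by
  obtain ⟨s₀, hs₀⟩ := hne
  obtain ⟨hx1, hx2, -⟩ := derivs_of_contDiffOn_two isOpen_Ioo hx
  have hxc : ContinuousOn x (Ioo T₁ T₂) := hx.continuousOn
  have hx1c : ContinuousOn (deriv x) (Ioo T₁ T₂) :=
    fun t ht => (hx2 t ht).continuousAt.continuousWithinAt
  have hFc : ContinuousOn
      (fun s => rF n h hinv H a (x s, deriv x s, u₀ + s * du₀, du₀)) (Ioo T₁ T₂) :=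
    (rF_contDiff hh hhinv hH ha).continuous.comp_continuousOn
      (hxc.prodMk (hx1c.prodMk (((continuous_const.add
        (continuous_id.mul continuous_const)).continuousOn).prodMk continuousOn_const)))
  obtain ⟨r, ρ, -, -, hr1, hρ1, hrCD, hdr, hddr⟩ :=
    exists_r_of_rhs isOpen_Ioo Set.ordConnected_Ioo hs₀ 0 0 hFc
  have hgeo : ∀ s ∈ Set.Ioo T₁ T₂,
      brinkGeo n h hinv H a x (fun s => u₀ + s * du₀) r s := by
    intro s hs
    rw [brinkGeo_iff]
    refine ⟨?_, ?_, ?_⟩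
    · rw [lin_deriv]
      exact (brinkSpatial_iff u₀ du₀ x s).mp (hsp s hs)
    · rw [lin_deriv2]
    · rw [lin_deriv]
      exact hddr s hs
  obtain ⟨X, U, R, hX2, hU2, hR2, hGeoAll, hEqx, hEqu, hEqr⟩ :=
    L T₁ T₂ x (fun s => u₀ + s * du₀) r hx (lin_contDiff u₀ du₀).contDiffOn hrCD hgeo
  obtain ⟨hU1, hU2', -⟩ := derivs_of_contDiffOn_two isOpen_univ (contDiffOn_univ.mpr hU2)
  have hU'' : ∀ s : ℝ, deriv (deriv U) s = 0 :=
    fun s => ((brinkGeo_iff X U R s).mp (hGeoAll s)).2.1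
  have hU'const : ∀ s : ℝ, deriv U s = du₀ := by
    have h2 : deriv U s₀ = du₀ := by
      rw [← derivEqOnOpen isOpen_Ioo hEqu hs₀, lin_deriv]
    intro s
    rw [← h2]
    refine const_of_hasDerivAt_zero isOpen_univ convex_univ (fun τ _ => ?_)
      (mem_univ s) (mem_univ s₀)
    have := hU2' τ (mem_univ τ)
    rwa [hU'' τ] at this
  have hUeq : ∀ s, U s = u₀ + s * du₀ := by
    intro s
    have hg : ∀ τ : ℝ, HasDerivAt (fun τ => U τ - (u₀ + τ * du₀)) 0 τ := fun τ => by
      simpa [hU'const τ] using (hU1 τ (mem_univ τ)).fun_sub (lin_hasDeriv u₀ du₀ τ)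
    have hc := const_of_hasDerivAt_zero isOpen_univ convex_univ (fun τ _ => hg τ)
      (mem_univ s) (mem_univ s₀)
    have h0 : U s₀ = u₀ + s₀ * du₀ := (hEqu hs₀).symm
    rw [h0] at hc
    simp only [sub_self] at hc
    linarith [hc]
  refine ⟨X, hX2, fun s => ?_, hEqx⟩
  rw [brinkSpatial_iff]
  have h1 := ((brinkGeo_iff X U R s).mp (hGeoAll s)).1
  have hU'fun : deriv U = fun _ => du₀ := funext hU'const
  rw [h1, hUeq s, hU'fun]

include hh hhinv hH ha in
lemma build_UR (u₀ du₀ s₀ c₀ c₁ : ℝ) (X : ℝ → Fin n → ℝ) (hX : ContDiff ℝ 2 X)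
    (hXsp : ∀ s, brinkSpatial n h hinv H a u₀ du₀ X s) :
    ∃ R : ℝ → ℝ, ContDiff ℝ 2 R ∧
      (∀ s, brinkGeo n h hinv H a X (fun s => u₀ + s * du₀) R s) ∧
      R s₀ = c₀ ∧ deriv R s₀ = c₁ ∧
      (∀ t, HasDerivAt (deriv R) (rF n h hinv H a (X t, deriv X t, u₀ + t * du₀, du₀)) t) := by
  obtain ⟨hX1, hX2', -⟩ := derivs_of_contDiffOn_two isOpen_univ (contDiffOn_univ.mpr hX)
  have hX1c : ContinuousOn (deriv X) univ :=
    fun t ht => (hX2' t ht).continuousAt.continuousWithinAt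
  have hFc : ContinuousOn
      (fun s => rF n h hinv H a (X s, deriv X s, u₀ + s * du₀, du₀)) univ :=
    (rF_contDiff hh hhinv hH ha).continuous.comp_continuousOn
      ((hX.continuous.continuousOn).prodMk (hX1c.prodMk (((continuous_const.add
        (continuous_id.mul continuous_const)).continuousOn).prodMk continuousOn_const)))
  obtain ⟨R, ρ, hR0, hρ0, hR1, hρ1, hRCD, hdR, hddR⟩ :=
    exists_r_of_rhs isOpen_univ Set.ordConnected_univ (mem_univ s₀) c₀ c₁ hFc
  have hdRfun : deriv R = ρ := funext fun t => hdR t (mem_univ t)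
  refine ⟨R, contDiffOn_univ.mp hRCD, ?_, hR0, by rw [hdR s₀ (mem_univ s₀), hρ0], ?_⟩
  · intro s
    rw [brinkGeo_iff]
    refine ⟨?_, ?_, ?_⟩
    · rw [lin_deriv]
      exact (brinkSpatial_iff u₀ du₀ X s).mp (hXsp s)
    · rw [lin_deriv2]
    · rw [lin_deriv]
      exact hddR s (mem_univ s)
  · intro t
    rw [hdRfun]
    exact hρ1 t (mem_univ t)

end main
/-- The Brinkmann spacetime is geodesically complete (every
geodesic defined on an interval extends to a geodesic defined on all of `ℝ`)
iff all inextendible solutions of the spatial equation \eqref{req} (for all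
constants `u̇₀`) are complete. -/
theorem brinkmann_complete_iff_spatial_complete
    (n : ℕ) (h hinv : (Fin n → ℝ) → Matrix (Fin n) (Fin n) ℝ)
    (hmet : IsRiemMetric n h hinv)
    (H : (Fin n → ℝ) → ℝ → ℝ) (a : (Fin n → ℝ) → ℝ → Fin n → ℝ)
    (hH : ContDiff ℝ (⊤ : ℕ∞) (fun p : (Fin n → ℝ) × ℝ => H p.1 p.2))
    (ha : ∀ i, ContDiff ℝ (⊤ : ℕ∞) (fun p : (Fin n → ℝ) × ℝ => a p.1 p.2 i)) :
    (∀ T₁ T₂ : ℝ, ∀ (x : ℝ → Fin n → ℝ) (u r : ℝ → ℝ),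
        ContDiffOn ℝ 2 x (Set.Ioo T₁ T₂) → ContDiffOn ℝ 2 u (Set.Ioo T₁ T₂) →
        ContDiffOn ℝ 2 r (Set.Ioo T₁ T₂) →
        (∀ s ∈ Set.Ioo T₁ T₂, brinkGeo n h hinv H a x u r s) →
        ∃ (X : ℝ → Fin n → ℝ) (U R : ℝ → ℝ),
          ContDiff ℝ 2 X ∧ ContDiff ℝ 2 U ∧ ContDiff ℝ 2 R ∧
          (∀ s : ℝ, brinkGeo n h hinv H a X U R s) ∧
          Set.EqOn x X (Set.Ioo T₁ T₂) ∧ Set.EqOn u U (Set.Ioo T₁ T₂) ∧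
          Set.EqOn r R (Set.Ioo T₁ T₂))
    ↔
    (∀ u₀ du₀ : ℝ, ∀ T₁ T₂ : ℝ, ∀ x : ℝ → Fin n → ℝ,
        ContDiffOn ℝ 2 x (Set.Ioo T₁ T₂) →
        (∀ s ∈ Set.Ioo T₁ T₂, brinkSpatial n h hinv H a u₀ du₀ x s) →
        ∃ X : ℝ → Fin n → ℝ, ContDiff ℝ 2 X ∧
          (∀ s : ℝ, brinkSpatial n h hinv H a u₀ du₀ X s) ∧
          Set.EqOn x X (Set.Ioo T₁ T₂)) := by
  obtain ⟨hh, hhinv, hsymm, hpos, hprod⟩ := hmet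
  constructor
  · intro L u₀ du₀ T₁ T₂ x hx hsp
    by_cases hne : (Ioo T₁ T₂).Nonempty
    · exact forward_main hh hhinv hH ha L u₀ du₀ T₁ T₂ x hne hx hsp
    · obtain ⟨ε, hε, x', hx', hsp'⟩ := spatial_local_exists hh hhinv hH ha u₀ du₀ 0
      have hne' : (Ioo (0 - ε) (0 + ε)).Nonempty := ⟨0, by constructor <;> linarith⟩
      obtain ⟨X, hX2, hXsp, -⟩ :=
        forward_main hh hhinv hH ha L u₀ du₀ _ _ x' hne' hx' hsp'
      exact ⟨X, hX2, hXsp, fun t ht => absurd ⟨t, ht⟩ hne⟩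
  · intro R T₁ T₂ x u r hx hu hr hgeo
    by_cases hne : (Ioo T₁ T₂).Nonempty
    · obtain ⟨s₀, hs₀⟩ := hne
      obtain ⟨hu1, hu2, -⟩ := derivs_of_contDiffOn_two isOpen_Ioo hu
      obtain ⟨hr1, hr2, -⟩ := derivs_of_contDiffOn_two isOpen_Ioo hr
      have hu'' : ∀ s ∈ Ioo T₁ T₂, deriv (deriv u) s = 0 :=
        fun s hs => ((brinkGeo_iff x u r s).mp (hgeo s hs)).2.1
      set du₀ := deriv u s₀ with hdu₀
      set u₀ := u s₀ - s₀ * du₀ with hu₀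
      have hu'const : ∀ s ∈ Ioo T₁ T₂, deriv u s = du₀ := by
        intro s hs
        refine const_of_hasDerivAt_zero isOpen_Ioo (convex_Ioo T₁ T₂)
          (fun τ hτ => ?_) hs hs₀
        have := hu2 τ hτ
        rwa [hu'' τ hτ] at this
      have huEq : ∀ s ∈ Ioo T₁ T₂, u s = u₀ + s * du₀ := by
        intro s hs
        have hg : ∀ τ ∈ Ioo T₁ T₂,
            HasDerivAt (fun τ => u τ - (u₀ + τ * du₀)) 0 τ := fun τ hτ => by
          simpa [hu'const τ hτ] using (hu1 τ hτ).fun_sub (lin_hasDeriv u₀ du₀ τ)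
        have hc := const_of_hasDerivAt_zero isOpen_Ioo (convex_Ioo T₁ T₂) hg hs hs₀
        have h0 : u s₀ - (u₀ + s₀ * du₀) = 0 := by rw [hu₀]; ring
        rw [h0] at hc
        linarith [hc]
      have hspx : ∀ s ∈ Ioo T₁ T₂, brinkSpatial n h hinv H a u₀ du₀ x s := by
        intro s hs
        rw [brinkSpatial_iff]
        have h1 := ((brinkGeo_iff x u r s).mp (hgeo s hs)).1
        rw [h1, huEq s hs, hu'const s hs]
      obtain ⟨X, hX2, hXsp, hEqx⟩ := R u₀ du₀ T₁ T₂ x hx hspx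
      obtain ⟨Rr, hR2, hRgeo, hR0, hR0', hRd⟩ :=
        build_UR hh hhinv hH ha u₀ du₀ s₀ (r s₀) (deriv r s₀) X hX2 hXsp
      obtain ⟨hRr1, -, -⟩ := derivs_of_contDiffOn_two isOpen_univ (contDiffOn_univ.mpr hR2)
      have hr'' : ∀ t ∈ Ioo T₁ T₂,
          deriv (deriv r) t = rF n h hinv H a (x t, deriv x t, u t, deriv u t) :=
        fun t ht => ((brinkGeo_iff x u r t).mp (hgeo t ht)).2.2
      have hstep1 : ∀ t ∈ Ioo T₁ T₂, deriv r t = deriv Rr t := by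
        intro t ht
        have hg : ∀ τ ∈ Ioo T₁ T₂,
            HasDerivAt (fun τ => deriv r τ - deriv Rr τ) 0 τ := by
          intro τ hτ
          have hval : deriv (deriv r) τ
              - rF n h hinv H a (X τ, deriv X τ, u₀ + τ * du₀, du₀) = 0 := by
            rw [hr'' τ hτ, hEqx hτ, derivEqOnOpen isOpen_Ioo hEqx hτ, huEq τ hτ,
              hu'const τ hτ, sub_self]
          have := (hr2 τ hτ).sub (hRd τ)
          rwa [hval] at this
        have hc := const_of_hasDerivAt_zero isOpen_Ioo (convex_Ioo T₁ T₂) hg ht hs₀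
        rw [hR0'] at hc
        linarith [hc]
      have hstep2 : Set.EqOn r Rr (Ioo T₁ T₂) := by
        intro t ht
        have hg : ∀ τ ∈ Ioo T₁ T₂, HasDerivAt (fun τ => r τ - Rr τ) 0 τ := by
          intro τ hτ
          have := (hr1 τ hτ).sub (hRr1 τ (mem_univ τ))
          rwa [hstep1 τ hτ, sub_self] at this
        have hc := const_of_hasDerivAt_zero isOpen_Ioo (convex_Ioo T₁ T₂) hg ht hs₀
        rw [hR0] at hc
        simp only [sub_self] at hc
        have : r t - Rr t = 0 := hc
        linarith [this]
      exact ⟨X, (fun s => u₀ + s * du₀), Rr, hX2, lin_contDiff u₀ du₀, hR2, hRgeo,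
        hEqx, fun t ht => huEq t ht, hstep2⟩
    · have hIoo : Ioo (0:ℝ) 0 = ∅ := Ioo_self 0
      obtain ⟨X, hX2, hXsp, -⟩ := R 0 0 0 0 (fun _ _ => 0)
        (by rw [hIoo]; intro s hs; exact absurd hs (notMem_empty s))
        (fun s hs => absurd hs (by rw [hIoo]; exact notMem_empty s))
      obtain ⟨Rr, hR2, hRgeo, -, -, -⟩ :=
        build_UR hh hhinv hH ha 0 0 0 0 0 X hX2 hXsp
      exact ⟨X, (fun s => 0 + s * 0), Rr, hX2, lin_contDiff 0 0, hR2, hRgeo,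
        fun t ht => absurd ⟨t, ht⟩ hne, fun t ht => absurd ⟨t, ht⟩ hne,
        fun t ht => absurd ⟨t, ht⟩ hne⟩
end
end
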